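/- arXiv:math/0311364 — 9 statements merged into one kernel-verified Lean document; each statement's English description precedes it below -/
import Mathlib

section
/- For every integer j ≥ 1, the 2-adic valuation of 2^{2j} · (12j+2)! · (6j)! / ((8j+2)! · (8j-2)! · (12j)) equals 1 + 2·v_2((3j)!/j!). -/
/-!
Writing `v n` for the 2-adic valuation of `n!`, Legendre's formula in the form
`v (2 * n + r) = v n + n` for `r < 2` reduces every factorial in the quotient to `(3j)!`, `j!` or
`(j - 1)!`, up to explicit linear terms in `j`. The linear terms cancel against `2 ^ (2j)` and
`v_2 (12j) = 2 + v_2 j`, and `v j = v (j - 1) + v_2 j` absorbs the remaining `v_2 j`.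
-/

open Nat

lemma padicValRat_natCast_div {p a b : ℕ} [Fact p.Prime] (ha : a ≠ 0) (hb : b ≠ 0) :
    padicValRat p ((a : ℚ) / b) = padicValNat p a - padicValNat p b := by
  rw [padicValRat.div (by exact_mod_cast ha) (by exact_mod_cast hb), padicValRat.of_nat,
    padicValRat.of_nat]

lemma padicValNat_factorial_mul_add_of_lt {p : ℕ} [Fact p.Prime] (n : ℕ) {r : ℕ} (hr : r < p) :
    padicValNat p (p * n + r)! = padicValNat p n ! + n := by
  rw [padicValNat_factorial_mul_add n hr, padicValNat_factorial_mul]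

lemma padicValNat_two_twelve_mul {j : ℕ} (hj : j ≠ 0) :
    padicValNat 2 (12 * j) = 2 + padicValNat 2 j := by
  rw [show 12 * j = 2 ^ 2 * (3 * j) by ring, padicValNat.mul (by norm_num) (by omega),
    padicValNat.mul (by norm_num) hj, padicValNat.prime_pow,
    padicValNat.eq_zero_of_not_dvd (by norm_num : ¬ 2 ∣ 3), zero_add]

lemma padicValNat_two_factorial_identity {j : ℕ} (hj : 1 ≤ j) :
    2 * j + padicValNat 2 (12 * j + 2)! + padicValNat 2 (6 * j)! + 2 * padicValNat 2 j ! =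
      1 + 2 * padicValNat 2 (3 * j)! + padicValNat 2 (8 * j + 2)! + padicValNat 2 (8 * j - 2)! +
        padicValNat 2 (12 * j) := by
  have legendre (n r : ℕ) (hr : r < 2) := padicValNat_factorial_mul_add_of_lt (p := 2) n hr
  have h12 : padicValNat 2 (12 * j + 2)! = padicValNat 2 (3 * j)! + 9 * j + 1 := by
    rw [show 12 * j + 2 = 2 * (2 * (3 * j) + 1) + 0 by ring, legendre _ _ (by norm_num),
      legendre _ _ (by norm_num)]
    ring
  have h6 : padicValNat 2 (6 * j)! = padicValNat 2 (3 * j)! + 3 * j := by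
    rw [show 6 * j = 2 * (3 * j) + 0 by ring, legendre _ _ (by norm_num)]
  have h8p : padicValNat 2 (8 * j + 2)! = padicValNat 2 j ! + 7 * j + 1 := by
    rw [show 8 * j + 2 = 2 * (2 * (2 * j + 0) + 1) + 0 by ring, legendre _ _ (by norm_num),
      legendre _ _ (by norm_num), legendre _ _ (by norm_num)]
    ring
  have h8m : padicValNat 2 (8 * j - 2)! = padicValNat 2 (j - 1)! + 7 * j - 3 := by
    rw [show 8 * j - 2 = 2 * (2 * (2 * (j - 1) + 1) + 1) + 0 by omega,
      legendre _ _ (by norm_num), legendre _ _ (by norm_num), legendre _ _ (by norm_num)]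
    omega
  have hsucc : padicValNat 2 j ! = padicValNat 2 (j - 1)! + padicValNat 2 j := by
    obtain ⟨k, rfl⟩ : ∃ k, j = k + 1 := ⟨j - 1, by omega⟩
    rw [factorial_succ, padicValNat.mul (by omega) (factorial_ne_zero k), add_tsub_cancel_right,
      add_comm]
  rw [h12, h6, h8p, h8m, padicValNat_two_twelve_mul (by omega)]
  omega

open Nat in
theorem v2_classical_coeff (j : ℕ) (hj : 1 ≤ j) :
    padicValRat 2 ((2 ^ (2 * j) * (12 * j + 2)! * (6 * j)! : ℚ) /
        ((8 * j + 2)! * (8 * j - 2)! * (12 * j))) =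
      1 + 2 * padicValRat 2 (((3 * j)! : ℚ) / (j ! : ℚ)) := by
  have hcast : ((2 ^ (2 * j) * (12 * j + 2)! * (6 * j)! : ℚ) /
        ((8 * j + 2)! * (8 * j - 2)! * (12 * j))) =
      ((2 ^ (2 * j) * (12 * j + 2)! * (6 * j)! : ℕ) : ℚ) /
        (((8 * j + 2)! * (8 * j - 2)! * (12 * j) : ℕ) : ℚ) := by
    push_cast; rfl
  have h12 : 12 * j ≠ 0 := by omega
  rw [hcast, padicValRat_natCast_div (by positivity) (by positivity),
    padicValRat_natCast_div (factorial_ne_zero _) (factorial_ne_zero _), padicValNat.mul (by positivity) (factorial_ne_zero _),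
    padicValNat.mul (by positivity) (factorial_ne_zero _), padicValNat.prime_pow,
    padicValNat.mul (by positivity) h12, padicValNat.mul (factorial_ne_zero _) (factorial_ne_zero _)]
  have hidentity := padicValNat_two_factorial_identity hj
  omega
end

section
/- The sequence j ↦ v_2((3j)!/j!) is strictly increasing in j, for j ≥ 0. -/
/-! Passing from `j` to `j + 1` multiplies `(3j)!/j!` by `3(3j+1)(3j+2)`, which is even because
`(3j+1)(3j+2)` is a product of consecutive integers. -/

open Nat

theorem padicValNat_lt_padicValNat_mul {p a b : ℕ} [Fact p.Prime] (ha : a ≠ 0) (hb : b ≠ 0)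
    (hpb : p ∣ b) : padicValNat p a < padicValNat p (a * b) := by
  rw [padicValNat.mul ha hb]
  have := one_le_padicValNat_of_dvd hb hpb
  omega

theorem factorial_three_mul_succ_div_factorial_succ (j : ℕ) :
    (3 * (j + 1))! / (j + 1)! = (3 * j)! / j ! * (3 * ((3 * j + 1) * (3 * j + 2))) := by
  obtain ⟨q, hq⟩ := Nat.factorial_dvd_factorial (show j ≤ 3 * j by omega)
  rw [hq, Nat.mul_div_cancel_left _ (Nat.factorial_pos j)]
  apply Nat.div_eq_of_eq_mul_left (Nat.factorial_pos _)
  rw [show 3 * (j + 1) = 3 * j + 1 + 1 + 1 by ring, Nat.factorial_succ, Nat.factorial_succ,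
    Nat.factorial_succ, Nat.factorial_succ, hq]
  ring

theorem v2_three_j_factorial_div_strictMono :
    StrictMono (fun j : ℕ => padicValNat 2 ((3 * j).factorial / j.factorial)) := by
  refine strictMono_nat_of_lt_succ fun j => ?_
  simp only [factorial_three_mul_succ_div_factorial_succ]
  have hq : (3 * j)! / j ! ≠ 0 :=
    (Nat.div_pos (Nat.factorial_le (by omega)) (Nat.factorial_pos _)).ne'
  have htwo : 2 ∣ 3 * ((3 * j + 1) * (3 * j + 2)) :=
    dvd_mul_of_dvd_right (Nat.even_mul_succ_self _).two_dvd _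
  exact padicValNat_lt_padicValNat_mul hq (by positivity) htwo
end

section
/- For every integer j ≥ 1, the rational number d_j := 2^{4j+1}·((3j)!)^2·(j!)^2 / (3·((2j)!)^4) is a 2-adic integer, i.e., its 2-adic valuation is nonnegative (in fact positive). -/
/-!
Since `(2j)! = 2^j · j! · (odd)`, the factor `2^(4j)` in the numerator exactly cancels the
`2`-part contributed by `(2j)!^4` beyond `j!^4`, and `3` is a `2`-adic unit. What remains is
`v₂(d_j) = 1 + 2 (v₂((3j)!) - v₂(j!))`, which is at least `1` because `j! ∣ (3j)!`.
-/

theorem padicValNat_factorial_mono {p : ℕ} [Fact p.Prime] :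
    Monotone fun n : ℕ => padicValNat p n.factorial :=
  fun _ _ h => (padicValNat_dvd_iff_le (Nat.factorial_ne_zero _)).mp
    (pow_padicValNat_dvd.trans (Nat.factorial_dvd_factorial h))

open Nat in
theorem diagonal_entry_is_two_adic_integer_general (j : ℕ) :
    0 < padicValRat 2 ((2 ^ (4 * j + 1) * ((3 * j)! : ℚ) ^ 2 * (j ! : ℚ) ^ 2) /
        (3 * ((2 * j)! : ℚ) ^ 4)) := by
  have h2 : padicValRat 2 2 = 1 := padicValRat.self one_lt_two
  have h3 : padicValRat 2 3 = 0 := by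
    simpa [padicValNat.eq_zero_of_not_dvd (show ¬2 ∣ 3 by decide)] using
      padicValRat.of_nat (p := 2) (n := 3)
  have hmono : padicValNat 2 j ! ≤ padicValNat 2 (3 * j)! :=
    padicValNat_factorial_mono (by omega)
  simp [padicValRat.div, padicValRat.mul, padicValRat.pow, factorial_ne_zero, h2, h3,
    padicValNat_factorial_mul]
  omega

open Nat in
theorem diagonal_entry_is_two_adic_integer (j : ℕ) (hj : 1 ≤ j) :
    0 < padicValRat 2 ((2 ^ (4 * j + 1) * ((3 * j)! : ℚ) ^ 2 * (j ! : ℚ) ^ 2) /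
        (3 * ((2 * j)! : ℚ) ^ 4)) :=
  diagonal_entry_is_two_adic_integer_general j
end

section
/- Define integers s_{i,j} for i,j ≥ 0 by: s_{0,0}=1, s_{1,1}=24, s_{2,1}=2^{11}, s_{1,2}=1, s_{i,j}=0 whenever (i ≤ 1 or j ≤ 1) and (i,j) is none of those four pairs, and for i,j ≥ 2 the recurrence s_{i,j} = 48·s_{i-1,j-1} + 2^{12}·s_{i-2,j-1} + s_{i-1,j-2}. Then for all i,j ≥ 1 with i ≤ 2j and j ≤ 2i, we have s_{i,j} = (i+j-1)! · 3j · 2^{8i-4j-1} / ((2i-j)! · (2j-i)!). -/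
open Nat

noncomputable def Fq (i j : ℕ) : ℚ :=
  ((i + j - 1)! : ℚ) * (3 * j) * (2 : ℚ) ^ ((8 * i : ℤ) - 4 * j - 1) /
    (((2 * i - j)! : ℚ) * ((2 * j - i)! : ℚ))

lemma facq (m : ℕ) : ((m+1)! : ℚ) = (m+1) * (m ! : ℚ) := by
  push_cast [Nat.factorial_succ]; ring

lemma desc3 (p : ℕ) : ((p.descFactorial 3 : ℕ) : ℚ) = (p:ℚ) * ((p:ℚ) - 1) * ((p:ℚ) - 2) := by
  match p with
  | 0 => norm_num [Nat.descFactorial]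
  | 1 => norm_num [Nat.descFactorial]
  | 2 => norm_num [Nat.descFactorial]
  | (n+3) => simp [Nat.descFactorial]; push_cast; ring

lemma L1q (i j : ℕ) (hi : 2 ≤ i) (hj : 2 ≤ j) (hij : i ≤ 2*j) (hji : j ≤ 2*i) :
    (if 1 ≤ 2*i - j ∧ 1 ≤ 2*j - i then Fq (i-1) (j-1) else 0)
      = ((i+j-3)! : ℚ) * (3*((j-1 : ℕ) : ℚ)) * ((2*i-j : ℕ) : ℚ) * ((2*j-i : ℕ):ℚ)
        * (2:ℚ)^((8*(i:ℕ) :ℤ)-4*(j:ℕ)-1-4) / (((2*i-j)! : ℚ) * ((2*j-i)! : ℚ)) := by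
  split_ifs with h
  · obtain ⟨p, hp⟩ : ∃ p, 2*i - j = p + 1 := ⟨2*i-j-1, by omega⟩
    obtain ⟨q, hq⟩ : ∃ q, 2*j - i = q + 1 := ⟨2*j-i-1, by omega⟩
    rw [Fq]
    rw [show (i-1) + (j-1) - 1 = i+j-3 by omega,
        show 2*(i-1) - (j-1) = p by omega,
        show 2*(j-1) - (i-1) = q by omega, hp, hq,
        show ((8*((i-1:ℕ)) :ℤ)-4*((j-1:ℕ))-1) = (8*(i:ℕ) :ℤ)-4*(j:ℕ)-1-4 by
          push_cast [Nat.cast_sub (by omega : 1 ≤ i), Nat.cast_sub (by omega : 1 ≤ j)]; ring]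
    rw [facq p, facq q]
    have h2 : (2:ℚ)^((8*(i:ℕ) :ℤ)-4*(j:ℕ)-1-4) ≠ 0 := zpow_ne_zero _ two_ne_zero
    field_simp
    push_cast
    ring
  · rcases not_and_or.mp h with h' | h'
    · rw [show (2*i-j : ℕ) = 0 by omega]; norm_num
    · rw [show (2*j-i : ℕ) = 0 by omega]; norm_num

lemma L2q (i j : ℕ) (hi : 2 ≤ i) (hj : 2 ≤ j) (hij : i ≤ 2*j) (hji : j ≤ 2*i) :
    (if 3 ≤ 2*i - j then Fq (i-2) (j-1) else 0)
      = ((i+j-4)! : ℚ) * (3*((j-1 : ℕ) : ℚ)) * (((2*i-j).descFactorial 3 : ℕ) : ℚ)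
        * (2:ℚ)^((8*(i:ℕ) :ℤ)-4*(j:ℕ)-1-12) / (((2*i-j)! : ℚ) * ((2*j-i)! : ℚ)) := by
  split_ifs with h
  · obtain ⟨p, hp⟩ : ∃ p, 2*i - j = p + 3 := ⟨2*i-j-3, by omega⟩
    rw [Fq]
    rw [show (i-2) + (j-1) - 1 = i+j-4 by omega,
        show 2*(i-2) - (j-1) = p by omega,
        show 2*(j-1) - (i-2) = 2*j-i by omega, hp,
        show ((8*((i-2:ℕ)) :ℤ)-4*((j-1:ℕ))-1) = (8*(i:ℕ) :ℤ)-4*(j:ℕ)-1-12 by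
          push_cast [Nat.cast_sub (by omega : 2 ≤ i), Nat.cast_sub (by omega : 1 ≤ j)]; ring]
    rw [desc3, facq (p+2), facq (p+1), facq p]
    have h2 : (2:ℚ)^((8*(i:ℕ) :ℤ)-4*(j:ℕ)-1-12) ≠ 0 := zpow_ne_zero _ two_ne_zero
    field_simp
    push_cast
    ring
  · rw [show (2*i-j).descFactorial 3 = 0 from Nat.descFactorial_eq_zero_iff_lt.2 (by omega)]
    norm_num

lemma L3q (i j : ℕ) (hi : 2 ≤ i) (hj : 2 ≤ j) (hij : i ≤ 2*j) (hji : j ≤ 2*i) :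
    (if 3 ≤ 2*j - i then Fq (i-1) (j-2) else 0)
      = ((i+j-4)! : ℚ) * (3*((j-2 : ℕ) : ℚ)) * (((2*j-i).descFactorial 3 : ℕ) : ℚ)
        * (2:ℚ)^((8*(i:ℕ) :ℤ)-4*(j:ℕ)-1) / (((2*i-j)! : ℚ) * ((2*j-i)! : ℚ)) := by
  split_ifs with h
  · obtain ⟨q, hq⟩ : ∃ q, 2*j - i = q + 3 := ⟨2*j-i-3, by omega⟩
    rw [Fq]
    rw [show (i-1) + (j-2) - 1 = i+j-4 by omega,
        show 2*(i-1) - (j-2) = 2*i-j by omega,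
        show 2*(j-2) - (i-1) = q by omega, hq,
        show ((8*((i-1:ℕ)) :ℤ)-4*((j-2:ℕ))-1) = (8*(i:ℕ) :ℤ)-4*(j:ℕ)-1 by
          push_cast [Nat.cast_sub (by omega : 1 ≤ i), Nat.cast_sub (by omega : 2 ≤ j)]; ring]
    rw [desc3, facq (q+2), facq (q+1), facq q]
    have h2 : (2:ℚ)^((8*(i:ℕ) :ℤ)-4*(j:ℕ)-1) ≠ 0 := zpow_ne_zero _ two_ne_zero
    field_simp
    push_cast
    ring
  · rw [show (2*j-i).descFactorial 3 = 0 from Nat.descFactorial_eq_zero_iff_lt.2 (by omega)]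
    norm_num

lemma keyq (i j : ℕ) (hi : 2 ≤ i) (hj : 2 ≤ j) (hij : i ≤ 2*j) (hji : j ≤ 2*i) :
    Fq i j
    = 48 * (if 1 ≤ 2*i - j ∧ 1 ≤ 2*j - i then Fq (i-1) (j-1) else 0)
    + 4096 * (if 3 ≤ 2*i - j then Fq (i-2) (j-1) else 0)
    + (if 3 ≤ 2*j - i then Fq (i-1) (j-2) else 0) := by
  rw [L1q i j hi hj hij hji, L2q i j hi hj hij hji, L3q i j hi hj hij hji]
  obtain ⟨n, hn⟩ : ∃ n, i + j = n + 4 := ⟨i+j-4, by omega⟩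
  rw [Fq, show i+j-1 = n+3 by omega, show i+j-3 = n+1 by omega, show i+j-4 = n by omega]
  rw [show (2:ℚ)^((8*(i:ℕ) :ℤ)-4*(j:ℕ)-1-4)
        = (2:ℚ)^((8*(i:ℕ) :ℤ)-4*(j:ℕ)-1) / 16 by
      rw [zpow_sub₀ (two_ne_zero : (2:ℚ) ≠ 0)]; norm_num,
      show (2:ℚ)^((8*(i:ℕ) :ℤ)-4*(j:ℕ)-1-12)
        = (2:ℚ)^((8*(i:ℕ) :ℤ)-4*(j:ℕ)-1) / 4096 by
      rw [zpow_sub₀ (two_ne_zero : (2:ℚ) ≠ 0)]; norm_num]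
  rw [facq (n+2), facq (n+1), facq n, desc3, desc3]
  have h2 : (2:ℚ)^((8*(i:ℕ) :ℤ)-4*(j:ℕ)-1) ≠ 0 := zpow_ne_zero _ two_ne_zero
  have hf1 : ((2*i-j)! : ℚ) ≠ 0 := by exact_mod_cast (Nat.factorial_pos _).ne'
  have hf2 : ((2*j-i)! : ℚ) ≠ 0 := by exact_mod_cast (Nat.factorial_pos _).ne'
  field_simp
  push_cast [Nat.cast_sub hij, Nat.cast_sub hji, Nat.cast_sub (by omega : 1 ≤ j),
    Nat.cast_sub (by omega : 2 ≤ j)]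
  have hnq : (n:ℚ) = (i:ℚ) + (j:ℚ) - 4 := by
    have : ((i+j : ℕ) : ℚ) = ((n+4 : ℕ) : ℚ) := by rw [hn]
    push_cast at this; linarith
  rw [hnq]
  ring

open Nat in
theorem s_entries_formula (s : ℕ → ℕ → ℤ)
    (h00 : s 0 0 = 1) (h11 : s 1 1 = 24) (h21 : s 2 1 = 2 ^ 11) (h12 : s 1 2 = 1)
    (hzero : ∀ i j : ℕ, (i ≤ 1 ∨ j ≤ 1) →
      ¬((i, j) = (0, 0) ∨ (i, j) = (1, 1) ∨ (i, j) = (2, 1) ∨ (i, j) = (1, 2)) →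
      s i j = 0)
    (hrec : ∀ i j : ℕ, 2 ≤ i → 2 ≤ j →
      s i j = 48 * s (i - 1) (j - 1) + 2 ^ 12 * s (i - 2) (j - 1) + s (i - 1) (j - 2)) :
    ∀ i j : ℕ, 1 ≤ i → 1 ≤ j → i ≤ 2 * j → j ≤ 2 * i →
      (s i j : ℚ) = ((i + j - 1)! : ℚ) * (3 * j) * (2 : ℚ) ^ ((8 * i : ℤ) - 4 * j - 1) /
        (((2 * i - j)! : ℚ) * ((2 * j - i)! : ℚ)) := by
  have Z : ∀ N i j, i + j = N → ¬(i = 0 ∧ j = 0) →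
      ¬(1 ≤ i ∧ 1 ≤ j ∧ i ≤ 2*j ∧ j ≤ 2*i) → s i j = 0 := by
    intro N
    induction N using Nat.strong_induction_on with
    | _ N ih =>
      intro i j hN h0 hr
      by_cases hc : i ≤ 1 ∨ j ≤ 1
      · apply hzero i j hc
        simp only [Prod.mk.injEq, not_or]
        omega
      · push_neg at hc
        obtain ⟨hi2, hj2⟩ := hc
        rw [hrec i j hi2 hj2,
          ih ((i-1)+(j-1)) (by omega) (i-1) (j-1) rfl (by omega) (by omega),
          ih ((i-2)+(j-1)) (by omega) (i-2) (j-1) rfl (by omega) (by omega),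
          ih ((i-1)+(j-2)) (by omega) (i-1) (j-2) rfl (by omega) (by omega)]
        ring
  have M : ∀ N i j, i + j = N → 1 ≤ i → 1 ≤ j → i ≤ 2*j → j ≤ 2*i →
      (s i j : ℚ) = Fq i j := by
    intro N
    induction N using Nat.strong_induction_on with
    | _ N ih =>
      intro i j hN hi hj hij hji
      by_cases hc : i ≤ 1 ∨ j ≤ 1
      · have : (i = 1 ∧ j = 1) ∨ (i = 1 ∧ j = 2) ∨ (i = 2 ∧ j = 1) := by omega
        rcases this with ⟨rfl, rfl⟩ | ⟨rfl, rfl⟩ | ⟨rfl, rfl⟩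
        · rw [h11, Fq]; norm_num [Nat.factorial]
        · rw [h12, Fq]; norm_num [Nat.factorial]
        · rw [h21, Fq]; norm_num [Nat.factorial]
      · push_neg at hc
        obtain ⟨hi2, hj2⟩ := hc
        have A : (s (i-1) (j-1) : ℚ)
            = (if 1 ≤ 2*i - j ∧ 1 ≤ 2*j - i then Fq (i-1) (j-1) else 0) := by
          split_ifs with h
          · exact ih ((i-1)+(j-1)) (by omega) _ _ rfl (by omega) (by omega) (by omega) (by omega)
          · rw [Z ((i-1)+(j-1)) (i-1) (j-1) rfl (by omega) (by omega)]; norm_num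
        have B : (s (i-2) (j-1) : ℚ)
            = (if 3 ≤ 2*i - j then Fq (i-2) (j-1) else 0) := by
          split_ifs with h
          · exact ih ((i-2)+(j-1)) (by omega) _ _ rfl (by omega) (by omega) (by omega) (by omega)
          · rw [Z ((i-2)+(j-1)) (i-2) (j-1) rfl (by omega) (by omega)]; norm_num
        have C : (s (i-1) (j-2) : ℚ)
            = (if 3 ≤ 2*j - i then Fq (i-1) (j-2) else 0) := by
          split_ifs with h
          · exact ih ((i-1)+(j-2)) (by omega) _ _ rfl (by omega) (by omega) (by omega) (by omega)
          · rw [Z ((i-1)+(j-2)) (i-1) (j-2) rfl (by omega) (by omega)]; norm_num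
        have e : (s i j : ℚ) = 48 * (s (i-1) (j-1) : ℚ) + 4096 * (s (i-2) (j-1) : ℚ)
            + (s (i-1) (j-2) : ℚ) := by
          rw [hrec i j hi2 hj2]; push_cast; ring
        rw [e, A, B, C, keyq i j hi2 hj2 hij hji]
  intro i j hi hj hij hji
  exact M (i+j) i j rfl hi hj hij hji
end

section
/- For i,j ≥ 1 with j ≤ i ≤ 2j, the rational number a_{i,j} := 2^{2i-2j} · (i!)^2 · ((2j)!)^2 · (2j+i-1)! / ((2i)! · (i-j)! · j! · (i+j)! · (2j-i)! · (3j-1)!) is a 2-adic integer, and if i > j then its 2-adic valuation is positive (i.e., a_{i,j} ≡ 0 mod 2), while a_{i,i} = 1. -/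
open Nat

namespace AEntryAux

noncomputable def S (n : ℕ) : ℤ := ((Nat.digits 2 n).sum : ℤ)
noncomputable def V (n : ℕ) : ℤ := (padicValNat 2 (n !) : ℤ)

lemma V_eq (n : ℕ) : V n = n - S n := by
  have h := sub_one_mul_padicValNat_factorial (p := 2) n
  have h2 := Nat.digit_sum_le 2 n
  simp only [V, S]
  omega

lemma S_le (n : ℕ) : S n ≤ n := by
  unfold S
  exact_mod_cast Nat.digit_sum_le 2 n

lemma S_two_mul (n : ℕ) : S (2 * n) = S n := by
  rcases Nat.eq_zero_or_pos n with h | h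
  · simp [h, S]
  · unfold S
    rw [Nat.digits_def' (by norm_num : 1 < 2) (by omega)]
    simp

lemma S_two_mul_add_one (n : ℕ) : S (2 * n + 1) = S n + 1 := by
  unfold S
  rw [Nat.digits_def' (by norm_num : 1 < 2) (by omega)]
  have h1 : (2 * n + 1) % 2 = 1 := by omega
  have h2 : (2 * n + 1) / 2 = n := by omega
  rw [h1, h2]
  push_cast [List.sum_cons]
  ring

lemma V_add_ge (a b : ℕ) : V a + V b ≤ V (a + b) := by
  have h := Nat.add_choose_mul_factorial_mul_factorial a b
  have hc : (a + b).choose b ≠ 0 := (Nat.choose_pos (Nat.le_add_left b a)).ne'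
  have hv : padicValNat 2 ((a + b)!) =
      padicValNat 2 ((a + b).choose b) + padicValNat 2 (a !) + padicValNat 2 (b !) := by
    rw [← h, padicValNat.mul (Nat.mul_ne_zero hc (Nat.factorial_ne_zero a))
        (Nat.factorial_ne_zero b),
      padicValNat.mul hc (Nat.factorial_ne_zero a)]
  simp only [V]
  omega

lemma S_add_le (a b : ℕ) : S (a + b) ≤ S a + S b := by
  have h := V_add_ge a b
  rw [V_eq, V_eq, V_eq] at h
  push_cast at h
  linarith

lemma S_lt (n : ℕ) (h : 2 ≤ n) : S n + 1 ≤ n := by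
  have h1 : (1 : ℤ) ≤ V n := by
    have hd : (2 : ℕ) ∣ n ! := Nat.dvd_factorial (by norm_num) h
    have := one_le_padicValNat_of_dvd (Nat.factorial_ne_zero n) hd
    simpa [V] using (Int.ofNat_le.mpr this)
  have h2 := V_eq n
  linarith

lemma S_pred (n : ℕ) (h : 1 ≤ n) : S (n - 1) = S n - 1 + (padicValNat 2 n : ℤ) := by
  obtain ⟨m, rfl⟩ : ∃ m, n = m + 1 := ⟨n - 1, by omega⟩
  have hv : padicValNat 2 ((m + 1)!) = padicValNat 2 (m + 1) + padicValNat 2 (m !) := by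
    rw [Nat.factorial_succ, padicValNat.mul (by omega) (Nat.factorial_ne_zero m)]
  have h1 := V_eq (m + 1)
  have h2 := V_eq m
  simp only [V] at h1 h2
  rw [hv] at h1
  simp only [Nat.add_sub_cancel]
  push_cast at h1 h2 ⊢
  linarith

lemma val_formula (j k : ℕ) (hj : 1 ≤ j) (hk : k ≤ j) :
    padicValRat 2
      ((2 ^ (2 * k) * ((j + k)! : ℚ) ^ 2 * ((2 * j)! : ℚ) ^ 2 * ((3 * j + k - 1)! : ℚ)) /
        (((2 * j + 2 * k)! : ℚ) * (k ! : ℚ) * (j ! : ℚ) * ((2 * j + k)! : ℚ) *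
          ((j - k)! : ℚ) * ((3 * j - 1)! : ℚ)))
    = 2 * k + 2 * V (j + k) + 2 * V (2 * j) + V (3 * j + k - 1)
      - V (2 * j + 2 * k) - V k - V j - V (2 * j + k) - V (j - k) - V (3 * j - 1) := by
  have hfac : ∀ n : ℕ, ((n ! : ℚ)) ≠ 0 := fun n => Nat.cast_ne_zero.mpr (Nat.factorial_ne_zero n)
  have h2k : ((2 : ℚ) ^ (2 * k)) ≠ 0 := by positivity
  have hvfac : ∀ n : ℕ, padicValRat 2 ((n ! : ℚ)) = V n := fun n => by
    rw [padicValRat.of_nat]; rfl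
  rw [padicValRat.div (by positivity) (by positivity),
    padicValRat.mul (by positivity) (hfac _),
    padicValRat.mul (by positivity) (by positivity),
    padicValRat.mul h2k (by positivity),
    padicValRat.mul (by positivity) (hfac _),
    padicValRat.mul (by positivity) (hfac _),
    padicValRat.mul (by positivity) (hfac _),
    padicValRat.mul (by positivity) (hfac _),
    padicValRat.mul (hfac _) (hfac _),
    padicValRat.pow _, padicValRat.pow _,
    padicValRat.pow _]
  have hself : padicValRat 2 (2 : ℚ) = 1 := by
    have := padicValRat.self (p := 2) (by norm_num)
    simpa using this
  rw [hself]
  simp only [hvfac]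
  push_cast
  ring

lemma key_ineq (j k : ℕ) (hj : 1 ≤ j) (hk : k ≤ j) :
    0 ≤ 2 * (k : ℤ) + 2 * V (j + k) + 2 * V (2 * j) + V (3 * j + k - 1)
      - V (2 * j + 2 * k) - V k - V j - V (2 * j + k) - V (j - k) - V (3 * j - 1) := by
  simp only [V_eq]
  have e1 : S (2 * j) = S j := S_two_mul j
  have e2 : S (2 * j + 2 * k) = S (j + k) := by
    rw [show 2 * j + 2 * k = 2 * (j + k) by ring, S_two_mul]
  have a1 : S (j + k) ≤ S k + S (2 * j + k) := by
    calc S (j + k) = S (k + (2 * j + k)) := by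
          rw [show k + (2 * j + k) = 2 * (j + k) by ring, S_two_mul]
      _ ≤ S k + S (2 * j + k) := S_add_le _ _
  have a2 : S j ≤ S (j - k) + S k := by
    calc S j = S ((j - k) + k) := by rw [Nat.sub_add_cancel hk]
      _ ≤ S (j - k) + S k := S_add_le _ _
  have a3 : S (3 * j + k - 1) ≤ S (3 * j - 1) + S k := by
    calc S (3 * j + k - 1) = S ((3 * j - 1) + k) := by
          congr 1; omega
      _ ≤ S (3 * j - 1) + S k := S_add_le _ _
  have a4 := S_le k
  have c1 : ((3 * j + k - 1 : ℕ) : ℤ) = 3 * j + k - 1 := by omega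
  have c2 : ((2 * j + 2 * k : ℕ) : ℤ) = 2 * j + 2 * k := by push_cast; ring
  have c3 : ((j - k : ℕ) : ℤ) = j - k := by omega
  have c4 : ((3 * j - 1 : ℕ) : ℤ) = 3 * j - 1 := by omega
  rw [e1, e2] at *
  push_cast [c1, c3, c4] at *
  linarith

lemma key_ineq_strict (j k : ℕ) (hj : 1 ≤ j) (hk : k ≤ j) (hk1 : 1 ≤ k) :
    0 < 2 * (k : ℤ) + 2 * V (j + k) + 2 * V (2 * j) + V (3 * j + k - 1)
      - V (2 * j + 2 * k) - V k - V j - V (2 * j + k) - V (j - k) - V (3 * j - 1) := by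
  simp only [V_eq]
  have e1 : S (2 * j) = S j := S_two_mul j
  have e2 : S (2 * j + 2 * k) = S (j + k) := by
    rw [show 2 * j + 2 * k = 2 * (j + k) by ring, S_two_mul]
  have a1 : S (j + k) ≤ S k + S (2 * j + k) := by
    calc S (j + k) = S (k + (2 * j + k)) := by
          rw [show k + (2 * j + k) = 2 * (j + k) by ring, S_two_mul]
      _ ≤ S k + S (2 * j + k) := S_add_le _ _
  have a2 : S j ≤ S (j - k) + S k := by
    calc S j = S ((j - k) + k) := by rw [Nat.sub_add_cancel hk]
      _ ≤ S (j - k) + S k := S_add_le _ _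
  have a3 : S (3 * j + k - 1) ≤ S (3 * j - 1) + S k := by
    calc S (3 * j + k - 1) = S ((3 * j - 1) + k) := by
          congr 1; omega
      _ ≤ S (3 * j - 1) + S k := S_add_le _ _
  have c1 : ((3 * j + k - 1 : ℕ) : ℤ) = 3 * j + k - 1 := by omega
  have c2 : ((j - k : ℕ) : ℤ) = j - k := by omega
  have c3 : ((3 * j - 1 : ℕ) : ℤ) = 3 * j - 1 := by omega
  rcases Nat.lt_or_ge k 2 with hk2 | hk2
  · -- k = 1
    have hkk : k = 1 := by omega
    subst hkk
    have b1 : S (2 * j + 1) = S j + 1 := S_two_mul_add_one j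
    have b2 : S (j - 1) = S j - 1 + (padicValNat 2 j : ℤ) := S_pred j hj
    have b3 : S (3 * j - 1) = S (3 * j) - 1 + (padicValNat 2 (3 * j) : ℤ) :=
      S_pred (3 * j) (by omega)
    have b4 : S j = S (j + 1) - 1 + (padicValNat 2 (j + 1) : ℤ) := by
      have := S_pred (j + 1) (by omega)
      simpa using this
    have b5 : padicValNat 2 (3 * j) = padicValNat 2 j := by
      rw [padicValNat.mul (by norm_num) (by omega),
        padicValNat.eq_zero_of_not_dvd (by norm_num), zero_add]
    have b6 : S (3 * j + 1 - 1) = S (3 * j) := by congr 1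
    have b7 : S 1 = 1 := by norm_num [S]
    have p1 : (0 : ℤ) ≤ (padicValNat 2 j : ℤ) := Int.ofNat_nonneg _
    have p2 : (0 : ℤ) ≤ (padicValNat 2 (j + 1) : ℤ) := Int.ofNat_nonneg _
    rw [e1, e2, b1, b6, b7] at *
    rw [b5] at b3
    push_cast [c1, c2, c3] at *
    linarith
  · -- k ≥ 2
    have a4 : S k + 1 ≤ k := S_lt k hk2
    rw [e1, e2] at *
    push_cast [c1, c2, c3] at *
    linarith

end AEntryAux

open AEntryAux in
open Nat in
theorem aEntry_integral (i j : ℕ) (hj : 1 ≤ j) (hji : j ≤ i) (hij : i ≤ 2 * j) :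
    0 ≤ padicValRat 2
        ((2 ^ (2 * i - 2 * j) * (i ! : ℚ) ^ 2 * ((2 * j)! : ℚ) ^ 2 * ((2 * j + i - 1)! : ℚ)) /
          (((2 * i)! : ℚ) * ((i - j)! : ℚ) * (j ! : ℚ) * ((i + j)! : ℚ) *
            ((2 * j - i)! : ℚ) * ((3 * j - 1)! : ℚ))) ∧
    (j < i → 0 < padicValRat 2
        ((2 ^ (2 * i - 2 * j) * (i ! : ℚ) ^ 2 * ((2 * j)! : ℚ) ^ 2 * ((2 * j + i - 1)! : ℚ)) /
          (((2 * i)! : ℚ) * ((i - j)! : ℚ) * (j ! : ℚ) * ((i + j)! : ℚ) *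
            ((2 * j - i)! : ℚ) * ((3 * j - 1)! : ℚ)))) ∧
    (i = j → (2 ^ (2 * i - 2 * j) * (i ! : ℚ) ^ 2 * ((2 * j)! : ℚ) ^ 2 * ((2 * j + i - 1)! : ℚ)) /
          (((2 * i)! : ℚ) * ((i - j)! : ℚ) * (j ! : ℚ) * ((i + j)! : ℚ) *
            ((2 * j - i)! : ℚ) * ((3 * j - 1)! : ℚ)) = 1) := by
  obtain ⟨k, rfl⟩ : ∃ k, i = j + k := ⟨i - j, by omega⟩
  have hk : k ≤ j := by omega
  rw [show 2 * (j + k) - 2 * j = 2 * k from by omega,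
    show j + k - j = k from by omega,
    show 2 * j + (j + k) - 1 = 3 * j + k - 1 from by omega,
    show 2 * (j + k) = 2 * j + 2 * k from by omega,
    show j + k + j = 2 * j + k from by omega,
    show 2 * j - (j + k) = j - k from by omega,
    val_formula j k hj hk]
  refine ⟨key_ineq j k hj hk, fun hlt => key_ineq_strict j k hj hk (by omega), fun hik => ?_⟩
  have hk0 : k = 0 := by omega
  subst hk0
  have hfac : ∀ n : ℕ, ((n ! : ℚ)) ≠ 0 := fun n => Nat.cast_ne_zero.mpr (Nat.factorial_ne_zero n)
  simp only [Nat.add_zero, Nat.mul_zero, Nat.sub_zero, pow_zero, Nat.factorial_zero,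
    Nat.cast_one]
  rw [div_eq_one_iff_eq (by positivity)]
  ring
end

section
/- Define u_{i,j} := (i+j-1)!·3j·2^{2i+2j-1}/((2i-j)!·(2j-i)!) for i,j ≥ 1 with i ≤ 2j and j ≤ 2i, and u_{i,j}:=0 otherwise. Define a_{i,j}, b_{i,j}, d_{i,i} as: a_{i,j} = 2^{2i-2j}·(i!)^2·((2j)!)^2·(2j+i-1)!/((2i)!·(i-j)!·j!·(i+j)!·(2j-i)!·(3j-1)!) for j ≤ i ≤ 2j (0 otherwise), b_{i,j} = (j/i)·a_{j,i} for i ≤ j ≤ 2i (0 otherwise), d_{i,i} = 2^{4i+1}·((3i)!)^2·(i!)^2/(3·((2i)!)^4). Then for all i,j ≥ 1: u_{i,j} = Σ_k a_{i,k}·d_{k,k}·b_{k,j}, where the sum is over k ≥ 1 (only finitely many terms are nonzero). -/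
open Nat

/-- reciprocal factorial on ℤ, zero for negative arguments -/
noncomputable def rf (n : ℤ) : ℚ := if 0 ≤ n then ((n.toNat)! : ℚ)⁻¹ else 0

lemma rf_natCast (n : ℕ) : rf (n : ℤ) = ((n)! : ℚ)⁻¹ := by
  simp [rf]

lemma rf_neg {n : ℤ} (h : n < 0) : rf n = 0 := by
  simp [rf, not_le.mpr h]

lemma rf_zero : rf 0 = 1 := by simp [rf]

lemma rf_step (n : ℤ) : rf n = (n + 1) * rf (n + 1) := by
  rcases lt_trichotomy n (-1) with h | h | h
  · rw [rf_neg (by omega), rf_neg (by omega)]; ring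
  · subst h; norm_num [rf_neg, rf_zero]
  · have h0 : 0 ≤ n := by omega
    have h1 : 0 ≤ n + 1 := by omega
    rw [rf, rf, if_pos h0, if_pos h1]
    have ht : (n + 1).toNat = n.toNat + 1 := by omega
    rw [ht, Nat.factorial_succ]
    have hc : ((n.toNat : ℚ) + 1) = (n : ℚ) + 1 := by
      have h2 : ((n.toNat : ℤ)) = n := Int.toNat_of_nonneg h0
      have : ((n.toNat : ℤ) : ℚ) = (n : ℚ) := by exact_mod_cast congrArg (fun x : ℤ => (x : ℚ)) h2
      push_cast at this ⊢; linarith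
    have hf : ((n.toNat)! : ℚ) ≠ 0 := by exact_mod_cast (Nat.factorial_ne_zero _)
    have hn1 : ((n : ℚ) + 1) ≠ 0 := by
      have : (0:ℚ) ≤ (n:ℚ) := by exact_mod_cast h0
      linarith
    push_cast
    rw [← hc]
    field_simp
noncomputable def fT (i j k : ℕ) : ℚ :=
  4 * k * ((2 * k + i - 1)! : ℚ) * ((2 * k + j - 1)! : ℚ) *
    rf ((i : ℤ) - k) * rf ((j : ℤ) - k) * rf ((i : ℤ) + k) * rf ((j : ℤ) + k) *
    rf (2 * (k : ℤ) - i) * rf (2 * (k : ℤ) - j)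

noncomputable def gT (i j k : ℕ) : ℚ :=
  ((2 * k + i - 1)! : ℚ) * ((2 * k + j - 1)! : ℚ) *
    rf ((i : ℤ) - k) * rf ((j : ℤ) - k + 1) * rf ((i : ℤ) + k - 1) * rf ((j : ℤ) + k) *
    rf (2 * (k : ℤ) - i - 2) * rf (2 * (k : ℤ) - j - 2)

noncomputable def rT (i j : ℕ) : ℚ :=
  ((2 * i)! : ℚ) * ((2 * j)! : ℚ) * ((i + j - 1)! : ℚ) /
    ((i ! : ℚ) ^ 2 * (j ! : ℚ) ^ 2 * ((2 * i - j)! : ℚ) * ((2 * j - i)! : ℚ))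

noncomputable def C1 (i j : ℕ) : ℚ :=
  ((j : ℚ) + 1) ^ 2 * (2 * (j : ℚ) - i + 1) * (2 * (j : ℚ) - i + 2) * ((i : ℚ) + j + 1)

noncomputable def C2 (i j : ℕ) : ℚ :=
  (2 * (j : ℚ) + 1) * (2 * (j : ℚ) + 2) * ((i : ℚ) + j) * ((i : ℚ) + j + 1) * (2 * (i : ℚ) - j)

lemma fT_zero₁ {i j k : ℕ} (h : i < k) : fT i j k = 0 := by
  unfold fT
  rw [show rf ((i : ℤ) - k) = 0 from rf_neg (by omega)]; ring

lemma fT_zero₂ {i j k : ℕ} (h : j < k) : fT i j k = 0 := by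
  unfold fT
  rw [show rf ((j : ℤ) - k) = 0 from rf_neg (by omega)]; ring

lemma fT_zero₃ {i j k : ℕ} (h : 2 * k < i) : fT i j k = 0 := by
  unfold fT
  rw [show rf (2 * (k : ℤ) - i) = 0 from rf_neg (by omega)]; ring

lemma fT_zero₄ {i j k : ℕ} (h : 2 * k < j) : fT i j k = 0 := by
  unfold fT
  rw [show rf (2 * (k : ℤ) - j) = 0 from rf_neg (by omega)]; ring

lemma star (i j k : ℕ) (hi : 1 ≤ i) (hj : 1 ≤ j) (hk : 1 ≤ k) :
    C1 i j * fT i (j + 1) k - C2 i j * fT i j k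
      = -((3 * (j : ℚ) + 2) * (2 * (j : ℚ) + 2)) * (gT i j (k + 1) - gT i j k) := by
  have e1 : (2 * k + (j + 1) - 1)! = (2 * k + j) * (2 * k + j - 1)! := by
    have h1 : 2 * k + (j + 1) - 1 = (2 * k + j - 1) + 1 := by omega
    have h2 : (2 * k + j - 1) + 1 = 2 * k + j := by omega
    rw [h1, Nat.factorial_succ, h2]
  have e2 : (2 * (k + 1) + i - 1)! = ((2 * k + i) + 1) * ((2 * k + i) * (2 * k + i - 1)!) := by
    have h1 : 2 * (k + 1) + i - 1 = ((2 * k + i - 1) + 1) + 1 := by omega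
    have h2 : (2 * k + i - 1) + 1 = 2 * k + i := by omega
    rw [h1, Nat.factorial_succ, Nat.factorial_succ, h2]
  have e3 : (2 * (k + 1) + j - 1)! = ((2 * k + j) + 1) * ((2 * k + j) * (2 * k + j - 1)!) := by
    have h1 : 2 * (k + 1) + j - 1 = ((2 * k + j - 1) + 1) + 1 := by omega
    have h2 : (2 * k + j - 1) + 1 = 2 * k + j := by omega
    rw [h1, Nat.factorial_succ, Nat.factorial_succ, h2]
  have hb := rf_step ((j : ℤ) - k)
  have hd := rf_step ((j : ℤ) + k)
  have ha := rf_step ((i : ℤ) - k - 1)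
  rw [show (i : ℤ) - k - 1 + 1 = (i : ℤ) - k from by ring] at ha
  have hc := rf_step ((i : ℤ) + k - 1)
  rw [show (i : ℤ) + k - 1 + 1 = (i : ℤ) + k from by ring] at hc
  have he1 := rf_step (2 * (k : ℤ) - i - 1)
  rw [show 2 * (k : ℤ) - i - 1 + 1 = 2 * (k : ℤ) - i from by ring] at he1
  have he2 := rf_step (2 * (k : ℤ) - i - 2)
  rw [show 2 * (k : ℤ) - i - 2 + 1 = 2 * (k : ℤ) - i - 1 from by ring, he1] at he2
  have hh1 := rf_step (2 * (k : ℤ) - j - 1)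
  rw [show 2 * (k : ℤ) - j - 1 + 1 = 2 * (k : ℤ) - j from by ring] at hh1
  have hh2 := rf_step (2 * (k : ℤ) - j - 2)
  rw [show 2 * (k : ℤ) - j - 2 + 1 = 2 * (k : ℤ) - j - 1 from by ring, hh1] at hh2
  unfold fT gT C1 C2
  rw [e1, e2, e3]
  -- normalize the rf arguments appearing with (j+1) and (k+1)
  rw [show ((j : ℕ) + 1 : ℕ) = j + 1 from rfl]
  push_cast
  rw [show (j : ℤ) + 1 - k = (j : ℤ) - k + 1 from by ring,
      show (j : ℤ) + 1 + k = (j : ℤ) + k + 1 from by ring,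
      show 2 * (k : ℤ) - (j + 1) = 2 * (k : ℤ) - j - 1 from by ring,
      show (i : ℤ) - (k + 1) = (i : ℤ) - k - 1 from by ring,
      show (j : ℤ) - (k + 1) + 1 = (j : ℤ) - k from by ring,
      show (i : ℤ) + (k + 1) - 1 = (i : ℤ) + k from by ring,
      show (j : ℤ) + (k + 1) = (j : ℤ) + k + 1 from by ring,
      show 2 * ((k : ℤ) + 1) - i - 2 = 2 * (k : ℤ) - i from by ring,
      show 2 * ((k : ℤ) + 1) - j - 2 = 2 * (k : ℤ) - j from by ring]
  rw [hb, hd, ha, hc, he2, hh1, hh2]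
  push_cast
  ring
lemma gT_one (i j : ℕ) (hi : 1 ≤ i) : gT i j 1 = 0 := by
  unfold gT
  rw [show 2 * ((1 : ℕ) : ℤ) - i - 2 = -(i : ℤ) from by push_cast; ring,
      rf_neg (by omega : -(i : ℤ) < 0)]
  ring

lemma gT_top (i j N : ℕ) (hN : i ≤ N) : gT i j (N + 1) = 0 := by
  unfold gT
  rw [rf_neg (by push_cast; omega : (i : ℤ) - ((N + 1 : ℕ) : ℤ) < 0)]
  ring

lemma tele_sum (g : ℕ → ℚ) (N : ℕ) :
    ∑ k ∈ Finset.Icc 1 N, (g (k + 1) - g k) = g (N + 1) - g 1 := by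
  induction N with
  | zero => simp
  | succ n ih =>
      rw [Finset.sum_Icc_succ_top (by omega : 1 ≤ n + 1), ih]
      ring

lemma sum_star (i j N : ℕ) (hi : 1 ≤ i) (hj : 1 ≤ j) (hN : i ≤ N) :
    C1 i j * ∑ k ∈ Finset.Icc 1 N, fT i (j + 1) k
      = C2 i j * ∑ k ∈ Finset.Icc 1 N, fT i j k := by
  have key : ∑ k ∈ Finset.Icc 1 N, (C1 i j * fT i (j + 1) k - C2 i j * fT i j k)
      = -((3 * (j : ℚ) + 2) * (2 * (j : ℚ) + 2))
        * ∑ k ∈ Finset.Icc 1 N, (gT i j (k + 1) - gT i j k) := by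
    rw [Finset.mul_sum]
    refine Finset.sum_congr rfl ?_
    intro k hk
    have hk1 : 1 ≤ k := (Finset.mem_Icc.mp hk).1
    exact star i j k hi hj hk1
  have tele := tele_sum (gT i j) N
  rw [tele, gT_one i j hi, gT_top i j N hN] at key
  simp only [Finset.sum_sub_distrib, ← Finset.mul_sum] at key
  linarith [key]

lemma sum_extend (i j M : ℕ) (hM : min i j ≤ M) :
    ∑ k ∈ Finset.Icc 1 M, fT i j k = ∑ k ∈ Finset.Icc 1 (min i j), fT i j k := by
  symm
  apply Finset.sum_subset
  · exact Finset.Icc_subset_Icc le_rfl hM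
  · intro k hk hk'
    have h1 : 1 ≤ k := (Finset.mem_Icc.mp hk).1
    have : min i j < k := by
      by_contra h
      exact hk' (Finset.mem_Icc.mpr ⟨h1, le_of_not_gt h⟩)
    rcases min_lt_iff.mp this with h2 | h2
    · exact fT_zero₁ h2
    · exact fT_zero₂ h2
lemma fact_cast_ne (n : ℕ) : ((n)! : ℚ) ≠ 0 := by
  exact_mod_cast Nat.factorial_ne_zero n

set_option maxHeartbeats 1000000 in
lemma r_rec (i j : ℕ) (hi : 1 ≤ i) (hj : 1 ≤ j) (hij : i ≤ 2 * j) (hji : j + 1 ≤ 2 * i) :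
    C2 i j * rT i j = C1 i j * rT i (j + 1) := by
  have e1 : (2 * (j + 1))! = ((2 * j) + 2) * (((2 * j) + 1) * (2 * j)!) := by
    rw [show 2 * (j + 1) = ((2 * j) + 1) + 1 from by omega, Nat.factorial_succ,
        Nat.factorial_succ]
  have e2 : (i + (j + 1) - 1)! = (i + j) * (i + j - 1)! := by
    rw [show i + (j + 1) - 1 = (i + j - 1) + 1 from by omega, Nat.factorial_succ,
        show (i + j - 1) + 1 = i + j from by omega]
  have e3 : (j + 1)! = (j + 1) * j ! := Nat.factorial_succ j
  have e4 : (2 * i - j)! = (2 * i - j) * (2 * i - (j + 1))! := by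
    rw [show 2 * i - j = (2 * i - (j + 1)) + 1 from by omega, Nat.factorial_succ,
        show 2 * i - (j + 1) + 1 = 2 * i - j from by omega]
  have e5 : (2 * (j + 1) - i)! = ((2 * j - i) + 2) * (((2 * j - i) + 1) * (2 * j - i)!) := by
    rw [show 2 * (j + 1) - i = ((2 * j - i) + 1) + 1 from by omega, Nat.factorial_succ,
        Nat.factorial_succ]
  unfold rT C1 C2
  rw [e1, e2, e3, e4, e5]
  have c1 : ((2 * i - j : ℕ) : ℚ) = 2 * (i : ℚ) - j := by
    have : ((2 * i - j : ℕ) : ℤ) = 2 * (i : ℤ) - j := by omega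
    exact_mod_cast this
  have c2 : ((2 * j - i : ℕ) : ℚ) = 2 * (j : ℚ) - i := by
    have : ((2 * j - i : ℕ) : ℤ) = 2 * (j : ℤ) - i := by omega
    exact_mod_cast this
  push_cast [c1, c2]
  have n1 := fact_cast_ne (i)
  have n2 := fact_cast_ne (j)
  have n3 := fact_cast_ne (2 * i - j)
  have n4 := fact_cast_ne (2 * j - i)
  have n5 := fact_cast_ne (2 * i - (j + 1))
  have hiq : (0:ℚ) ≤ (i:ℚ) := by positivity
  have hjq : (0:ℚ) ≤ (j:ℚ) := by positivity
  have m1 : (2 * (i:ℚ) - j) ≠ 0 := by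
    have : (j:ℚ) + 1 ≤ 2 * i := by exact_mod_cast hji
    intro h; nlinarith
  have m2 : ((j:ℚ) + 1) ≠ 0 := by positivity
  have m3 : (2 * (j:ℚ) - i + 1) ≠ 0 := by
    have : (i:ℚ) ≤ 2 * j := by exact_mod_cast hij
    intro h; nlinarith
  have m4 : (2 * (j:ℚ) - i + 2) ≠ 0 := by
    have : (i:ℚ) ≤ 2 * j := by exact_mod_cast hij
    intro h; nlinarith
  field_simp
set_option maxHeartbeats 1000000 in
lemma baseA (j : ℕ) (hj : 1 ≤ j) :
    ∑ k ∈ Finset.Icc 1 (min (2 * j) j), fT (2 * j) j k = rT (2 * j) j := by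
  rw [min_eq_right (by omega : j ≤ 2 * j)]
  rw [Finset.sum_eq_single_of_mem j (Finset.mem_Icc.mpr ⟨hj, le_rfl⟩)
    (fun k hk hne => fT_zero₃ (by
      have := (Finset.mem_Icc.mp hk).2
      omega))]
  unfold fT rT
  rw [show (2 * j + 2 * j - 1)! = (4 * j - 1)! from by congr 1; omega,
      show (2 * j + j - 1)! = (3 * j - 1)! from by congr 1; omega,
      show (2 * (2 * j))! = (4 * j) * (4 * j - 1)! from by
        rw [show 2 * (2 * j) = (4 * j - 1) + 1 from by omega, Nat.factorial_succ,
            show (4 * j - 1) + 1 = 4 * j from by omega],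
      show (2 * (2 * j) - j)! = (3 * j) * (3 * j - 1)! from by
        rw [show 2 * (2 * j) - j = (3 * j - 1) + 1 from by omega, Nat.factorial_succ,
            show (3 * j - 1) + 1 = 3 * j from by omega],
      show (2 * j - 2 * j)! = 1 from by simp,
      show rf (((2 * j : ℕ) : ℤ) - j) = ((j)! : ℚ)⁻¹ from by
        rw [show ((2 * j : ℕ) : ℤ) - j = ((j : ℕ) : ℤ) from by push_cast; ring, rf_natCast],
      show rf ((j : ℤ) - j) = 1 from by rw [show (j : ℤ) - j = 0 from by ring, rf_zero],
      show rf (((2 * j : ℕ) : ℤ) + j) = ((3 * j)! : ℚ)⁻¹ from by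
        rw [show ((2 * j : ℕ) : ℤ) + j = ((3 * j : ℕ) : ℤ) from by push_cast; ring, rf_natCast],
      show rf ((j : ℤ) + j) = ((2 * j)! : ℚ)⁻¹ from by
        rw [show (j : ℤ) + j = ((2 * j : ℕ) : ℤ) from by push_cast; ring, rf_natCast],
      show rf (2 * (j : ℤ) - (2 * j : ℕ)) = 1 from by
        rw [show 2 * (j : ℤ) - ((2 * j : ℕ) : ℤ) = 0 from by push_cast; ring, rf_zero],
      show rf (2 * (j : ℤ) - j) = ((j)! : ℚ)⁻¹ from by
        rw [show 2 * (j : ℤ) - j = ((j : ℕ) : ℤ) from by push_cast; ring, rf_natCast]]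
  have n1 := fact_cast_ne j
  have n2 := fact_cast_ne (2 * j)
  have n3 := fact_cast_ne (3 * j)
  have n4 := fact_cast_ne (3 * j - 1)
  have n5 := fact_cast_ne (4 * j - 1)
  have hjq : ((j : ℚ)) ≠ 0 := Nat.cast_ne_zero.mpr (by omega)
  have hn : (3 * j)! = (3 * j) * (3 * j - 1)! := by
    conv_lhs => rw [show 3 * j = (3 * j - 1) + 1 from by omega]
    rw [Nat.factorial_succ, show (3 * j - 1) + 1 = 3 * j from by omega]
  have h3 : ((3 * j)! : ℚ) = 3 * (j : ℚ) * ((3 * j - 1)! : ℚ) := by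
    calc ((3 * j)! : ℚ) = (((3 * j) * (3 * j - 1)! : ℕ) : ℚ) := by exact_mod_cast hn
    _ = 3 * (j : ℚ) * ((3 * j - 1)! : ℚ) := by push_cast; ring
  push_cast
  rw [h3]
  field_simp
set_option maxHeartbeats 1000000 in
lemma baseB (j : ℕ) (hj : 1 ≤ j) :
    ∑ k ∈ Finset.Icc 1 (min (2 * j - 1) j), fT (2 * j - 1) j k = rT (2 * j - 1) j := by
  rw [min_eq_right (by omega : j ≤ 2 * j - 1)]
  rw [Finset.sum_eq_single_of_mem j (Finset.mem_Icc.mpr ⟨hj, le_rfl⟩)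
    (fun k hk hne => fT_zero₃ (by
      have := (Finset.mem_Icc.mp hk).2
      omega))]
  unfold fT rT
  rw [show (2 * j + (2 * j - 1) - 1)! = (4 * j - 2)! from by congr 1; omega,
      show (2 * j + j - 1)! = (3 * j - 1)! from by congr 1; omega,
      show (2 * (2 * j - 1))! = (4 * j - 2)! from by congr 1; omega,
      show ((2 * j - 1) + j - 1)! = (3 * j - 2)! from by congr 1; omega,
      show (2 * (2 * j - 1) - j)! = (3 * j - 2)! from by congr 1; omega,
      show (2 * j - (2 * j - 1))! = 1 from by
        rw [show 2 * j - (2 * j - 1) = 1 from by omega]; rfl,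
      show rf (((2 * j - 1 : ℕ) : ℤ) - j) = (((j - 1))! : ℚ)⁻¹ from by
        rw [show ((2 * j - 1 : ℕ) : ℤ) - j = ((j - 1 : ℕ) : ℤ) from by omega, rf_natCast],
      show rf ((j : ℤ) - j) = 1 from by rw [show (j : ℤ) - j = 0 from by ring, rf_zero],
      show rf (((2 * j - 1 : ℕ) : ℤ) + j) = (((3 * j - 1))! : ℚ)⁻¹ from by
        rw [show ((2 * j - 1 : ℕ) : ℤ) + j = ((3 * j - 1 : ℕ) : ℤ) from by omega, rf_natCast],
      show rf ((j : ℤ) + j) = ((2 * j)! : ℚ)⁻¹ from by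
        rw [show (j : ℤ) + j = ((2 * j : ℕ) : ℤ) from by push_cast; ring, rf_natCast],
      show rf (2 * (j : ℤ) - ((2 * j - 1 : ℕ) : ℤ)) = 1 from by
        rw [show 2 * (j : ℤ) - ((2 * j - 1 : ℕ) : ℤ) = ((1 : ℕ) : ℤ) from by omega, rf_natCast]
        simp,
      show rf (2 * (j : ℤ) - j) = ((j)! : ℚ)⁻¹ from by
        rw [show 2 * (j : ℤ) - j = ((j : ℕ) : ℤ) from by push_cast; ring, rf_natCast]]
  have n1 := fact_cast_ne j
  have n2 := fact_cast_ne (2 * j)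
  have n3 := fact_cast_ne (2 * j - 1)
  have n4 := fact_cast_ne (3 * j - 1)
  have n5 := fact_cast_ne (3 * j - 2)
  have n6 := fact_cast_ne (4 * j - 2)
  have n7 := fact_cast_ne (j - 1)
  have hjq : ((j : ℚ)) ≠ 0 := Nat.cast_ne_zero.mpr (by omega)
  have h2j : ((2 * j)! : ℚ) = 2 * (j : ℚ) * ((2 * j - 1)! : ℚ) := by
    have hn : (2 * j)! = (2 * j) * (2 * j - 1)! := by
      conv_lhs => rw [show 2 * j = (2 * j - 1) + 1 from by omega]
      rw [Nat.factorial_succ, show (2 * j - 1) + 1 = 2 * j from by omega]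
    calc ((2 * j)! : ℚ) = (((2 * j) * (2 * j - 1)! : ℕ) : ℚ) := by exact_mod_cast hn
    _ = 2 * (j : ℚ) * ((2 * j - 1)! : ℚ) := by push_cast; ring
  have hjf : ((j)! : ℚ) = (j : ℚ) * ((j - 1)! : ℚ) := by
    have hn : (j)! = j * (j - 1)! := by
      conv_lhs => rw [show j = (j - 1) + 1 from by omega]
      rw [Nat.factorial_succ, show (j - 1) + 1 = j from by omega]
    calc ((j)! : ℚ) = ((j * (j - 1)! : ℕ) : ℚ) := by exact_mod_cast hn
    _ = (j : ℚ) * ((j - 1)! : ℚ) := by push_cast; ring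
  rw [h2j, hjf]
  field_simp
  ring
lemma C1_ne (i j : ℕ) (hij : i ≤ 2 * j) : C1 i j ≠ 0 := by
  unfold C1
  have h1 : (i : ℚ) ≤ 2 * j := by exact_mod_cast hij
  have h2 : (0:ℚ) ≤ (i:ℚ) := by positivity
  have h3 : (0:ℚ) ≤ (j:ℚ) := by positivity
  have p1 : (0:ℚ) < ((j : ℚ) + 1) ^ 2 := by positivity
  have p2 : (0:ℚ) < 2 * (j : ℚ) - i + 1 := by linarith
  have p3 : (0:ℚ) < 2 * (j : ℚ) - i + 2 := by linarith
  have p4 : (0:ℚ) < (i : ℚ) + j + 1 := by linarith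
  exact ne_of_gt (mul_pos (mul_pos (mul_pos p1 p2) p3) p4)

lemma main_sum (i : ℕ) (hi : 1 ≤ i) :
    ∀ j, 1 ≤ j → i ≤ 2 * j → j ≤ 2 * i →
      ∑ k ∈ Finset.Icc 1 (min i j), fT i j k = rT i j := by
  intro j
  induction j using Nat.strong_induction_on with
  | _ j IH =>
    intro hj hij hji
    by_cases hA : i = 2 * j
    · subst hA; exact baseA j hj
    by_cases hB : i = 2 * j - 1
    · subst hB; exact baseB j hj
    -- now i ≤ 2*j - 2, so j ≥ 2
    have hj2 : 2 ≤ j := by omega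
    have hle : i ≤ 2 * (j - 1) := by omega
    have hprev := IH (j - 1) (by omega) (by omega) hle (by omega)
    have hstep := sum_star i (j - 1) (i + j) hi (by omega) (by omega)
    rw [show (j - 1) + 1 = j from by omega] at hstep
    rw [sum_extend i j (i + j) (by omega), sum_extend i (j - 1) (i + j) (by omega)] at hstep
    rw [hprev] at hstep
    have hrec := r_rec i (j - 1) hi (by omega) hle (by omega)
    rw [show (j - 1) + 1 = j from by omega] at hrec
    have hC1 : C1 i (j - 1) ≠ 0 := C1_ne i (j - 1) hle
    rw [hrec] at hstep
    exact mul_left_cancel₀ hC1 hstep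

/-- The matrix entry of `U = U_2` acting on weight-0 overconvergent cusp forms,
with respect to the basis `g, g^2, g^3, ...`. -/
noncomputable def uEntry (i j : ℕ) : ℚ :=
  if i ≤ 2 * j ∧ j ≤ 2 * i then
    (((i + j - 1)! : ℚ) * (3 * j) * 2 ^ (2 * i + 2 * j - 1)) /
      (((2 * i - j)! : ℚ) * ((2 * j - i)! : ℚ))
  else 0

/-- The lower-triangular banded matrix `A`. -/
noncomputable def aEntry (i j : ℕ) : ℚ :=
  if j ≤ i ∧ i ≤ 2 * j then
    (2 ^ (2 * i - 2 * j) * (i ! : ℚ) ^ 2 * ((2 * j)! : ℚ) ^ 2 * ((2 * j + i - 1)! : ℚ)) /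
      (((2 * i)! : ℚ) * ((i - j)! : ℚ) * (j ! : ℚ) * ((i + j)! : ℚ) *
        ((2 * j - i)! : ℚ) * ((3 * j - 1)! : ℚ))
  else 0

/-- The upper-triangular banded matrix `B`, with `b_{i,j} = (j/i)·a_{j,i}`. -/
noncomputable def bEntry (i j : ℕ) : ℚ :=
  if i ≤ j ∧ j ≤ 2 * i then ((j : ℚ) / (i : ℚ)) * aEntry j i else 0

/-- The diagonal matrix `D`. -/
noncomputable def dEntry (i : ℕ) : ℚ :=
  (2 ^ (4 * i + 1) * ((3 * i)! : ℚ) ^ 2 * (i ! : ℚ) ^ 2) / (3 * ((2 * i)! : ℚ) ^ 4)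

noncomputable def C0 (i j : ℕ) : ℚ :=
  3 * (j : ℚ) * 2 ^ (2 * i + 2 * j - 1) * (i ! : ℚ) ^ 2 * (j ! : ℚ) ^ 2 /
    (((2 * i)! : ℚ) * ((2 * j)! : ℚ))
set_option maxHeartbeats 4000000 in
lemma term_eq (i j k : ℕ) (hi : 1 ≤ i) (hj : 1 ≤ j) (hk : 1 ≤ k) :
    aEntry i k * dEntry k * bEntry k j = C0 i j * fT i j k := by
  by_cases h1 : k ≤ i ∧ i ≤ 2 * k
  · by_cases h2 : k ≤ j ∧ j ≤ 2 * k
    · unfold bEntry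
      rw [if_pos h2]
      unfold aEntry dEntry C0 fT
      rw [if_pos h1, if_pos h2]
      rw [show rf ((i : ℤ) - k) = (((i - k))! : ℚ)⁻¹ from by
            rw [show (i : ℤ) - k = ((i - k : ℕ) : ℤ) from by omega, rf_natCast],
          show rf ((j : ℤ) - k) = (((j - k))! : ℚ)⁻¹ from by
            rw [show (j : ℤ) - k = ((j - k : ℕ) : ℤ) from by omega, rf_natCast],
          show rf ((i : ℤ) + k) = (((i + k))! : ℚ)⁻¹ from by
            rw [show (i : ℤ) + k = ((i + k : ℕ) : ℤ) from by omega, rf_natCast],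
          show rf ((j : ℤ) + k) = (((j + k))! : ℚ)⁻¹ from by
            rw [show (j : ℤ) + k = ((j + k : ℕ) : ℤ) from by omega, rf_natCast],
          show rf (2 * (k : ℤ) - i) = (((2 * k - i))! : ℚ)⁻¹ from by
            rw [show 2 * (k : ℤ) - i = ((2 * k - i : ℕ) : ℤ) from by omega, rf_natCast],
          show rf (2 * (k : ℤ) - j) = (((2 * k - j))! : ℚ)⁻¹ from by
            rw [show 2 * (k : ℤ) - j = ((2 * k - j : ℕ) : ℤ) from by omega, rf_natCast]]
      have h3k : ((3 * k)! : ℚ) = 3 * (k : ℚ) * ((3 * k - 1)! : ℚ) := by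
        have hn : (3 * k)! = (3 * k) * (3 * k - 1)! := by
          conv_lhs => rw [show 3 * k = (3 * k - 1) + 1 from by omega]
          rw [Nat.factorial_succ, show (3 * k - 1) + 1 = 3 * k from by omega]
        calc ((3 * k)! : ℚ) = (((3 * k) * (3 * k - 1)! : ℕ) : ℚ) := by exact_mod_cast hn
        _ = 3 * (k : ℚ) * ((3 * k - 1)! : ℚ) := by push_cast; ring
      rw [h3k]
      rw [show (2:ℚ) ^ (2 * i - 2 * k) = 2 ^ (2 * i) / 2 ^ (2 * k) from by
            rw [eq_div_iff (by positivity), ← pow_add]; congr 1; omega,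
          show (2:ℚ) ^ (2 * j - 2 * k) = 2 ^ (2 * j) / 2 ^ (2 * k) from by
            rw [eq_div_iff (by positivity), ← pow_add]; congr 1; omega,
          show (2:ℚ) ^ (2 * i + 2 * j - 1) = 2 ^ (2 * i + 2 * j) / 2 from by
            rw [eq_div_iff (by positivity), ← pow_succ]; congr 1; omega]
      have n1 := fact_cast_ne (i - k)
      have n2 := fact_cast_ne (j - k)
      have n3 := fact_cast_ne (i + k)
      have n4 := fact_cast_ne (j + k)
      have n5 := fact_cast_ne (2 * k - i)
      have n6 := fact_cast_ne (2 * k - j)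
      have n7 := fact_cast_ne (3 * k - 1)
      have n8 := fact_cast_ne k
      have n9 := fact_cast_ne (2 * i)
      have n10 := fact_cast_ne (2 * j)
      have n11 := fact_cast_ne (2 * k)
      have n12 := fact_cast_ne i
      have n13 := fact_cast_ne j
      have hkq : ((k : ℚ)) ≠ 0 := Nat.cast_ne_zero.mpr (by omega)
      field_simp
      ring
    · unfold bEntry
      rw [if_neg h2, mul_zero]
      rcases not_and_or.mp h2 with h | h
      · rw [fT_zero₂ (by omega), mul_zero]
      · rw [fT_zero₄ (by omega), mul_zero]
  · unfold aEntry
    rw [if_neg h1, zero_mul, zero_mul]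
    rcases not_and_or.mp h1 with h | h
    · rw [fT_zero₁ (by omega), mul_zero]
    · rw [fT_zero₃ (by omega), mul_zero]
set_option maxHeartbeats 1000000 in
lemma u_eq_C0_rT (i j : ℕ) (hi : 1 ≤ i) (hj : 1 ≤ j) (h : i ≤ 2 * j ∧ j ≤ 2 * i) :
    uEntry i j = C0 i j * rT i j := by
  unfold uEntry C0 rT
  rw [if_pos h]
  have n1 := fact_cast_ne i
  have n2 := fact_cast_ne j
  have n3 := fact_cast_ne (2 * i)
  have n4 := fact_cast_ne (2 * j)
  have n5 := fact_cast_ne (2 * i - j)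
  have n6 := fact_cast_ne (2 * j - i)
  field_simp

/-- The factorization `U = A·D·B`: all terms with `k > min i j` (or `k = 0`) vanish,
so the sum over all `k ≥ 1` is the finite sum below. -/
theorem U_eq_ADB (i j : ℕ) (hi : 1 ≤ i) (hj : 1 ≤ j) :
    uEntry i j = ∑ k ∈ Finset.Icc 1 (min i j), aEntry i k * dEntry k * bEntry k j := by
  by_cases h : i ≤ 2 * j ∧ j ≤ 2 * i
  · have hterm : ∀ k ∈ Finset.Icc 1 (min i j),
        aEntry i k * dEntry k * bEntry k j = C0 i j * fT i j k := fun k hk =>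
      term_eq i j k hi hj (Finset.mem_Icc.mp hk).1
    rw [Finset.sum_congr rfl hterm, ← Finset.mul_sum, main_sum i hi j hj h.1 h.2]
    exact u_eq_C0_rT i j hi hj h
  · rw [uEntry, if_neg h]
    symm
    apply Finset.sum_eq_zero
    intro k hk
    have hk1 := Finset.mem_Icc.mp hk
    have hki : k ≤ i := le_trans hk1.2 (min_le_left _ _)
    have hkj : k ≤ j := le_trans hk1.2 (min_le_right _ _)
    rcases not_and_or.mp h with h' | h'
    · rw [aEntry, if_neg (by omega : ¬(k ≤ i ∧ i ≤ 2 * k)), zero_mul, zero_mul]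
    · rw [bEntry, if_neg (by omega : ¬(k ≤ j ∧ j ≤ 2 * k)), mul_zero]
end

section
/- Let f(q) = q·∏_{n≥1}(1+q^n)^{24} ∈ ℤ[[q]]. Define the formal operation sending f(q) to f(q)·f(-q) (computed in ℤ[[q]] after checking f(-q) makes sense). Then f(q)·f(-q) = -f(q^2). -/
/-!
Write `P = ∏ (1 + qⁿ)`, so that `f = q P²⁴`. Multiplying `P` by `∏ (1 - qⁿ)` gives
`∏ (1 - q²ⁿ)`, while splitting `∏ (1 - qⁿ)` into odd and even factors gives
`∏ (1 - q²ⁿ⁻¹) · ∏ (1 - q²ⁿ)`; cancelling the unit `∏ (1 - q²ⁿ)` yields Euler's identity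
`P · ∏ (1 - q²ⁿ⁻¹) = 1`. Splitting `P(-q)` the same way gives `P(-q) = ∏ (1 - q²ⁿ⁻¹) · P(q²)`,
hence `P(q) P(-q) = P(q²)`, and the theorem follows from `q · (-q) = -q²`.
The infinite products are taken in the coefficientwise topology on `R⟦X⟧`.
-/

open PowerSeries Finset

/-- `f(q²)`: the power series obtained by substituting `q²` for `q`. -/
noncomputable def evalSq (f : PowerSeries ℤ) : PowerSeries ℤ :=
  PowerSeries.mk fun n => if n % 2 = 0 then coeff (n / 2) f else 0

open Filter Topology PowerSeries.WithPiTopology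

namespace PowerSeries

variable {R : Type*} [CommRing R]

theorem tendsto_order_X_pow_comp [Nontrivial R] {k : ℕ → ℕ} (hk : Tendsto k atTop atTop) :
    Tendsto (fun n ↦ (X ^ k n : R⟦X⟧).order) atTop (𝓝 ⊤) := by
  simp_rw [order_X_pow]
  exact ENat.tendsto_nhds_top_iff_natCast_lt.2 fun m ↦
    (hk.eventually_gt_atTop m).mono fun _ ↦ Nat.cast_lt.2

namespace WithPiTopology

variable [TopologicalSpace R]

theorem continuous_of_continuous_coeff {α : Type*} [TopologicalSpace α] {g : α → R⟦X⟧}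
    (h : ∀ d, Continuous fun x ↦ coeff d (g x)) : Continuous g :=
  continuous_iff_continuousAt.2 fun _ ↦
    (tendsto_iff_coeff_tendsto R _ _ _).2 fun d ↦ (h d).continuousAt

theorem continuous_rescale [ContinuousMul R] (a : R) : Continuous (rescale a) :=
  continuous_of_continuous_coeff fun d ↦ by
    simp_rw [coeff_rescale]
    exact continuous_const.mul (continuous_coeff R d)

theorem continuous_expand (p : ℕ) (hp : p ≠ 0) : Continuous (expand (R := R) p hp) :=
  continuous_of_continuous_coeff fun d ↦ by
    simp_rw [coeff_expand]
    split_ifs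
    · exact continuous_coeff R _
    · exact continuous_const

theorem eq_of_tendsto_of_trunc_eq [T2Space R] {F : ℕ → R⟦X⟧} {f g : R⟦X⟧}
    (hF : Tendsto F atTop (𝓝 g)) (h : ∀ N, trunc N f = trunc N (F N)) : f = g := by
  refine tendsto_nhds_unique ((tendsto_iff_coeff_tendsto R _ _ _).2 fun d ↦ ?_) hF
  refine tendsto_atTop_of_eventually_const (i₀ := d + 1) fun N hN ↦ ?_
  have := congrArg (Polynomial.coeff · d) (h N)
  simpa [coeff_trunc, Nat.lt_of_succ_le hN] using this.symm

theorem multipliable_one_add_X_pow_comp {k : ℕ → ℕ} (hk : ∀ n, n ≤ k n) :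
    Multipliable fun n ↦ (1 : R⟦X⟧) + X ^ k n := by
  nontriviality R
  exact multipliable_one_add_of_tendsto_order_atTop_nhds_top R
    (tendsto_order_X_pow_comp (tendsto_atTop_mono hk tendsto_id))

theorem multipliable_one_sub_X_pow_comp {k : ℕ → ℕ} (hk : ∀ n, n ≤ k n) :
    Multipliable fun n ↦ (1 : R⟦X⟧) - X ^ k n := by
  nontriviality R
  simp_rw [sub_eq_add_neg]
  refine multipliable_one_add_of_tendsto_order_atTop_nhds_top R ?_
  simpa only [order_neg] using tendsto_order_X_pow_comp (tendsto_atTop_mono hk tendsto_id)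

variable [IsTopologicalRing R] [T2Space R]

theorem tprod_one_add_X_pow_mul_tprod_one_sub_X_pow_odd :
    (∏' n, (1 + X ^ (n + 1) : R⟦X⟧)) * ∏' n, (1 - X ^ (2 * n + 1) : R⟦X⟧) = 1 := by
  have hE : ∏' n, (1 - X ^ (n + 1) : R⟦X⟧) =
      (∏' n, (1 - X ^ (2 * n + 1) : R⟦X⟧)) * ∏' n, (1 - X ^ (2 * n + 2) : R⟦X⟧) :=
    (tprod_even_mul_odd (f := fun n ↦ (1 - X ^ (n + 1) : R⟦X⟧))
      (multipliable_one_sub_X_pow_comp fun n ↦ by omega)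
      (multipliable_one_sub_X_pow_comp fun n ↦ by omega)).symm
  have hPE : (∏' n, (1 + X ^ (n + 1) : R⟦X⟧)) * ∏' n, (1 - X ^ (n + 1) : R⟦X⟧) =
      ∏' n, (1 - X ^ (2 * n + 2) : R⟦X⟧) := by
    rw [← (multipliable_one_add_X_pow_comp fun n ↦ by omega).tprod_mul
      (multipliable_one_sub_X_pow_comp fun n ↦ by omega)]
    exact tprod_congr fun n ↦ by ring
  have hunit : IsUnit (∏' n, (1 - X ^ (2 * n + 2) : R⟦X⟧)) := by
    rw [isUnit_iff_constantCoeff, (multipliable_one_sub_X_pow_comp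
      fun n ↦ by omega).map_tprod _ (continuous_constantCoeff R)]
    simp
  apply hunit.mul_left_injective
  dsimp only
  rw [mul_assoc, ← hE, hPE, one_mul]

theorem rescale_neg_one_tprod_one_add_X_pow :
    rescale (-1) (∏' n, (1 + X ^ (n + 1) : R⟦X⟧)) =
      (∏' n, (1 - X ^ (2 * n + 1) : R⟦X⟧)) *
        expand 2 two_ne_zero (∏' n, (1 + X ^ (n + 1) : R⟦X⟧)) := by
  have hP : Multipliable fun n ↦ (1 + X ^ (n + 1) : R⟦X⟧) :=
    multipliable_one_add_X_pow_comp fun n ↦ by omega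
  rw [hP.map_tprod _ (continuous_rescale _), hP.map_tprod _ (continuous_expand 2 two_ne_zero)]
  simp only [map_add, map_one, map_pow, rescale_neg_one_X, expand_X, ← pow_mul]
  have h_even : ∀ n, (1 + (-X) ^ (2 * n + 1) : R⟦X⟧) = 1 - X ^ (2 * n + 1) := fun n ↦ by
    rw [Odd.neg_pow ⟨n, rfl⟩, sub_eq_add_neg]
  have h_odd : ∀ n, (1 + (-X) ^ (2 * n + 1 + 1) : R⟦X⟧) = 1 + X ^ (2 * (n + 1)) := fun n ↦ by
    rw [Even.neg_pow ⟨n + 1, by ring⟩, mul_add_one]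
  rw [← tprod_even_mul_odd
    ((multipliable_one_sub_X_pow_comp fun n ↦ by omega).congr fun n ↦ (h_even n).symm)
    ((multipliable_one_add_X_pow_comp fun n ↦ by omega).congr fun n ↦ (h_odd n).symm),
    tprod_congr h_even, tprod_congr h_odd]

theorem tprod_one_add_X_pow_mul_rescale_neg_one :
    (∏' n, (1 + X ^ (n + 1) : R⟦X⟧)) * rescale (-1) (∏' n, (1 + X ^ (n + 1) : R⟦X⟧)) =
      expand 2 two_ne_zero (∏' n, (1 + X ^ (n + 1) : R⟦X⟧)) := by
  rw [rescale_neg_one_tprod_one_add_X_pow, ← mul_assoc,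
    tprod_one_add_X_pow_mul_tprod_one_sub_X_pow_odd, one_mul]

end WithPiTopology

end PowerSeries

theorem evalSq_eq_expand (f : ℤ⟦X⟧) : evalSq f = expand 2 two_ne_zero f := by
  ext n
  simp only [evalSq, coeff_mk, coeff_expand, Nat.dvd_iff_mod_eq_zero]

/-- `f(q)·f(-q) = -f(q²)` for `f = q·∏(1+q^n)^24`; `f(-q)` is `rescale (-1) f`. -/
theorem f_mul_f_neg (f : PowerSeries ℤ)
    (hf : ∀ N, trunc N f =
      trunc N ((X : PowerSeries ℤ) * ∏ n ∈ Finset.range N, (1 + X ^ (n + 1)) ^ 24)) :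
    f * rescale (-1) f = -evalSq f := by
  have hP : Multipliable fun n ↦ (1 + X ^ (n + 1) : ℤ⟦X⟧) :=
    multipliable_one_add_X_pow_comp fun n ↦ by omega
  obtain rfl : f = X * (∏' n, (1 + X ^ (n + 1) : ℤ⟦X⟧)) ^ 24 := by
    refine eq_of_tendsto_of_trunc_eq ?_ hf
    simpa only [prod_pow] using (hP.hasProd.tendsto_prod_nat.pow 24).const_mul X
  rw [evalSq_eq_expand, map_mul, map_mul, map_pow, map_pow, rescale_neg_one_X, expand_X,
    ← tprod_one_add_X_pow_mul_rescale_neg_one]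
  ring
end

section
/- Define U on ℤ[[q]] by U(Σ a_n q^n) = Σ a_{2n} q^n, let f(q) = q·∏_{n≥1}(1+q^n)^{24}, and define X_k := U(f^k) for k ≥ 0. Assuming U(f) = 24f + 2^{11}f^2 and f(q)f(-q) = -f(q^2), prove that X_0 = 1, X_1 = 24f + 2^{11}f^2, and for k ≥ 2, X_k = (48f + 2^{12}f^2)·X_{k-1} + f·X_{k-2}. In particular, U(f^k) is a polynomial in f with integer coefficients of degree at most 2k. -/
open PowerSeries Finset

/-- The operator `U = U_2` on `q`-expansions: `U(Σ aₙ qⁿ) = Σ a_{2n} qⁿ`. -/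
noncomputable def U2 (f : PowerSeries ℤ) : PowerSeries ℤ :=
  PowerSeries.mk fun n => coeff (2 * n) f

/-! Since `f(q) + f(-q) = 2 (U f)(q²)` and, by hypothesis, `f(q) f(-q) = -f(q²)`, the series `f`
is a root of `T² - 2 (U f)(q²) T - f(q²)`. Multiplying `f² = 2 (U f)(q²) f + f(q²)` by `f^m`
and applying `U`, which is linear over series in `q²` (`U (h(q²) g) = h · U g`), gives the
recurrence `U(f^{m+2}) = 2 U(f) · U(f^{m+1}) + f · U(f^m)`. -/

lemma coeff_U2 (g : PowerSeries ℤ) (n : ℕ) : coeff n (U2 g) = coeff (2 * n) g := by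
  simp [U2]

lemma U2_add (a b : PowerSeries ℤ) : U2 (a + b) = U2 a + U2 b := by
  ext n
  simp [coeff_U2]

lemma U2_one : U2 (1 : PowerSeries ℤ) = 1 := by
  ext n
  simp [coeff_U2, coeff_one]

lemma U2_evalSq_mul (h g : PowerSeries ℤ) : U2 (evalSq h * g) = h * U2 g := by
  ext n
  rw [coeff_U2, coeff_mul, coeff_mul,
    ← sum_filter_add_sum_filter_not (antidiagonal (2 * n)) (fun p => p.1 % 2 = 0)]
  have h_odd : ∑ p ∈ (antidiagonal (2 * n)).filter (fun p => ¬ p.1 % 2 = 0),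
      coeff p.1 (evalSq h) * coeff p.2 g = 0 :=
    sum_eq_zero fun p hp => by simp [evalSq, (mem_filter.mp hp).2]
  rw [h_odd, add_zero]
  refine sum_nbij' (fun p => (p.1 / 2, p.2 / 2)) (fun p => (2 * p.1, 2 * p.2))
    ?_ ?_ ?_ ?_ ?_ <;> intro p hp <;>
    simp only [mem_filter, HasAntidiagonal.mem_antidiagonal] at hp ⊢
  · omega
  · omega
  · ext <;> simp <;> omega
  · ext <;> simp
  · have h_even : 2 * (p.2 / 2) = p.2 := by omega
    simp only [evalSq, coeff_mk, hp.2, if_true, coeff_U2, h_even]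

lemma add_rescale_neg_one (g : PowerSeries ℤ) :
    g + rescale (-1) g = evalSq (2 * U2 g) := by
  ext n
  simp only [map_add, coeff_rescale, evalSq, coeff_mk]
  rcases Nat.even_or_odd n with hn | hn
  · rw [hn.neg_one_pow, if_pos (Nat.even_iff.mp hn), two_mul, map_add, coeff_U2,
      Nat.two_mul_div_two_of_even hn]
    ring
  · rw [hn.neg_one_pow, if_neg (Nat.not_even_iff_odd.mpr hn ∘ Nat.even_iff.mpr)]
    ring

lemma sq_eq_of_mul_rescale_neg_one {g : PowerSeries ℤ}
    (hneg : g * rescale (-1) g = -evalSq g) :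
    g ^ 2 = evalSq (2 * U2 g) * g + evalSq g := by
  rw [← add_rescale_neg_one, ← neg_neg (evalSq g), ← hneg]
  ring

lemma U2_pow_add_two {g : PowerSeries ℤ} (hneg : g * rescale (-1) g = -evalSq g) (m : ℕ) :
    U2 (g ^ (m + 2)) = 2 * U2 g * U2 (g ^ (m + 1)) + g * U2 (g ^ m) := by
  have h_pow : g ^ (m + 2) = evalSq (2 * U2 g) * g ^ (m + 1) + evalSq g * g ^ m := by
    rw [pow_add, sq_eq_of_mul_rescale_neg_one hneg]
    ring
  rw [h_pow, U2_add, U2_evalSq_mul, U2_evalSq_mul]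

noncomputable def U2PowPoly : ℕ → Polynomial ℤ
  | 0 => 1
  | 1 => 24 * Polynomial.X + 2 ^ 11 * Polynomial.X ^ 2
  | m + 2 => (48 * Polynomial.X + 2 ^ 12 * Polynomial.X ^ 2) * U2PowPoly (m + 1) +
      Polynomial.X * U2PowPoly m

open Polynomial in
lemma natDegree_U2PowPoly_le : ∀ k, (U2PowPoly k).natDegree ≤ 2 * k
  | 0 => by simp [U2PowPoly]
  | 1 => by rw [U2PowPoly]; compute_degree
  | m + 2 => by
    rw [U2PowPoly]
    have h_coeff : (48 * Polynomial.X + 2 ^ 12 * Polynomial.X ^ 2 : ℤ[X]).natDegree ≤ 2 := by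
      compute_degree
    have h₁ := natDegree_mul_le_of_le h_coeff (natDegree_U2PowPoly_le (m + 1))
    have h₂ := natDegree_mul_le_of_le natDegree_X_le (natDegree_U2PowPoly_le m)
    exact natDegree_add_le_of_degree_le (by omega) (by omega)

lemma U2_pow_eq_aeval_U2PowPoly {f : PowerSeries ℤ} (hU : U2 f = 24 * f + 2 ^ 11 * f ^ 2)
    (hneg : f * rescale (-1) f = -evalSq f) : ∀ k, U2 (f ^ k) = Polynomial.aeval f (U2PowPoly k)
  | 0 => by simp [U2PowPoly, U2_one]
  | 1 => by simp [U2PowPoly, hU, map_ofNat]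
  | m + 2 => by
    rw [U2_pow_add_two hneg, U2_pow_eq_aeval_U2PowPoly hU hneg (m + 1),
      U2_pow_eq_aeval_U2PowPoly hU hneg m, hU, U2PowPoly]
    simp only [map_add, map_mul, map_pow, Polynomial.aeval_X, map_ofNat]
    ring

theorem U2_f_pow_general (f : PowerSeries ℤ)
    (hU : U2 f = 24 * f + 2 ^ 11 * f ^ 2)
    (hneg : f * rescale (-1) f = -evalSq f) :
    U2 (f ^ 0) = 1 ∧
    U2 (f ^ 1) = 24 * f + 2 ^ 11 * f ^ 2 ∧
    (∀ k : ℕ, 2 ≤ k →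
      U2 (f ^ k) = (48 * f + 2 ^ 12 * f ^ 2) * U2 (f ^ (k - 1)) + f * U2 (f ^ (k - 2))) ∧
    (∀ k : ℕ, ∃ P : Polynomial ℤ, P.natDegree ≤ 2 * k ∧ U2 (f ^ k) = Polynomial.aeval f P) := by
  refine ⟨by rw [pow_zero, U2_one], by rw [pow_one, hU], fun k hk => ?_,
    fun k => ⟨U2PowPoly k, natDegree_U2PowPoly_le k, U2_pow_eq_aeval_U2PowPoly hU hneg k⟩⟩
  obtain ⟨m, rfl⟩ : ∃ m, k = m + 2 := ⟨k - 2, by omega⟩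
  rw [U2_pow_add_two hneg, hU]
  rw [show m + 2 - 1 = m + 1 from rfl, Nat.add_sub_cancel]
  ring

/-- With `X_k := U(f^k)`: `X₀ = 1`, `X₁ = 24f + 2^{11}f²`, the recurrence
`X_k = (48f + 2^{12}f²)·X_{k-1} + f·X_{k-2}` for `k ≥ 2`, and in particular each
`U(f^k)` is an integer polynomial in `f` of degree at most `2k`. -/
theorem U2_f_pow (f : PowerSeries ℤ)
    (hf : ∀ N, trunc N f =
      trunc N ((X : PowerSeries ℤ) * ∏ n ∈ Finset.range N, (1 + X ^ (n + 1)) ^ 24))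
    (hU : U2 f = 24 * f + 2 ^ 11 * f ^ 2)
    (hneg : f * rescale (-1) f = -evalSq f) :
    U2 (f ^ 0) = 1 ∧
    U2 (f ^ 1) = 24 * f + 2 ^ 11 * f ^ 2 ∧
    (∀ k : ℕ, 2 ≤ k →
      U2 (f ^ k) = (48 * f + 2 ^ 12 * f ^ 2) * U2 (f ^ (k - 1)) + f * U2 (f ^ (k - 2))) ∧
    (∀ k : ℕ, ∃ P : Polynomial ℤ, P.natDegree ≤ 2 * k ∧ U2 (f ^ k) = Polynomial.aeval f P) :=
  U2_f_pow_general f hU hneg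
end

section
/- Let D be the diagonal ℚ_2-linear operator on the space of sequences with d_{j,j} = 2^{4j+1}·((3j)!)^2·(j!)^2/(3·((2j)!)^4). If A and B are infinite matrices over ℤ_2 congruent to the identity matrix modulo 2, with A lower triangular banded (a_{i,j}=0 unless j ≤ i ≤ 2j) and B upper triangular banded (b_{i,j}=0 unless i ≤ j ≤ 2i), then for every finite set S = {r_1,...,r_n} of distinct positive integers, the n×n principal minor of B·A·D indexed by S has the same 2-adic valuation as the corresponding principal minor of D (whenever the latter is nonzero). -/
open Nat

/-- The diagonal entries of `D`, as elements of `ℚ₂`. -/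
noncomputable def dDiag (j : ℕ+) : ℚ_[2] :=
  (((2 ^ (4 * (j : ℕ) + 1) * ((3 * (j : ℕ))! : ℚ) ^ 2 * ((j : ℕ)! : ℚ) ^ 2) /
      (3 * ((2 * (j : ℕ))! : ℚ) ^ 4) : ℚ) : ℚ_[2])

/-- If `A`, `B` are matrices over `ℤ₂` congruent to the identity mod 2, `A` lower
triangular banded and `B` upper triangular banded, then any principal minor of
`B·A·D` has the same 2-adic valuation as the corresponding principal minor of `D`. -/
theorem minor_BAD_valuation (A B : ℕ+ → ℕ+ → ℤ_[2])
    (hAband : ∀ i j : ℕ+, ¬(j ≤ i ∧ i ≤ 2 * j) → A i j = 0)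
    (hBband : ∀ i j : ℕ+, ¬(i ≤ j ∧ j ≤ 2 * i) → B i j = 0)
    (hA : ∀ i j : ℕ+, (2 : ℤ_[2]) ∣ (A i j - if i = j then 1 else 0))
    (hB : ∀ i j : ℕ+, (2 : ℤ_[2]) ∣ (B i j - if i = j then 1 else 0))
    (S : Finset ℕ+)
    (hD : Matrix.det (Matrix.of fun i j : S =>
      if i = j then dDiag (i : ℕ+) else (0 : ℚ_[2])) ≠ 0) :
    (Matrix.det (Matrix.of fun i j : S =>
        (∑ k ∈ Finset.Icc 1 (2 * (i : ℕ+)),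
          ((B i k : ℚ_[2]) * (A k j : ℚ_[2]))) * dDiag (j : ℕ+))).valuation =
    (Matrix.det (Matrix.of fun i j : S =>
        if i = j then dDiag (i : ℕ+) else (0 : ℚ_[2]))).valuation := by
  classical
  -- The matrix C = B·A over ℤ₂, restricted to entries with the banded sum.
  set C : ℕ+ → ℕ+ → ℤ_[2] := fun i j =>
    ∑ k ∈ Finset.Icc 1 (2 * i), B i k * A k j with hC
  -- C is congruent to the identity mod 2.
  have hCmod : ∀ i j : ℕ+, (2 : ℤ_[2]) ∣ (C i j - if i = j then 1 else 0) := by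
    intro i j
    have hmem : i ∈ Finset.Icc 1 (2 * i) := by
      refine Finset.mem_Icc.2 ⟨i.one_le, ?_⟩
      rw [← PNat.coe_le_coe]
      push_cast
      omega
    have key : C i j - (if i = j then 1 else 0) =
        (∑ k ∈ Finset.Icc 1 (2 * i), (B i k - if i = k then 1 else 0) * A k j)
          + (A i j - if i = j then 1 else 0) := by
      rw [hC]
      simp only [sub_mul, Finset.sum_sub_distrib, ite_mul, one_mul, zero_mul]
      rw [Finset.sum_ite_eq _ i (fun k => A k j), if_pos hmem]
      ring
    rw [key]
    exact dvd_add (Finset.dvd_sum fun k _ => Dvd.dvd.mul_right (hB i k) _) (hA i j)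
  -- The principal minor of C over ℤ₂.
  set MC : Matrix S S ℤ_[2] := Matrix.of fun i j : S => C i j with hMC
  -- det MC ≡ 1 mod 2.
  have hdet2 : (2 : ℤ_[2]) ∣ MC.det - 1 := by
    set I : Ideal ℤ_[2] := Ideal.span {2} with hI
    have hmap : MC.map (Ideal.Quotient.mk I) = 1 := by
      ext i j
      have h : Ideal.Quotient.mk I (C i j) =
          Ideal.Quotient.mk I (if (i : ℕ+) = (j : ℕ+) then 1 else 0) :=
        Ideal.Quotient.eq.2 (by rw [hI, Ideal.mem_span_singleton]; exact hCmod i j)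
      rw [Matrix.map_apply, hMC, Matrix.of_apply, h]
      by_cases hij : i = j
      · rw [hij, Matrix.one_apply_eq, if_pos rfl, map_one]
      · rw [Matrix.one_apply_ne hij, if_neg (fun hc => hij (Subtype.ext hc)), map_zero]
    have : Ideal.Quotient.mk I MC.det = Ideal.Quotient.mk I 1 := by
      rw [RingHom.map_det, RingHom.mapMatrix_apply, hmap, Matrix.det_one, map_one]
    rw [← Ideal.mem_span_singleton, ← hI]
    exact Ideal.Quotient.eq.1 this
  -- hence det MC is a unit of ℤ₂.
  have hnorm : ‖MC.det‖ = 1 := by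
    by_contra h
    have hlt : ‖MC.det‖ < 1 := lt_of_le_of_ne (PadicInt.norm_le_one _) h
    have hsub : ‖MC.det - 1‖ < 1 := by
      obtain ⟨t, ht⟩ := hdet2
      rw [ht]
      calc ‖(2 : ℤ_[2]) * t‖ ≤ ‖(2 : ℤ_[2])‖ * 1 := by
            refine (norm_mul_le _ _).trans ?_
            exact mul_le_mul_of_nonneg_left (PadicInt.norm_le_one t) (norm_nonneg _)
        _ < 1 := by
            rw [mul_one]
            have : ‖(2 : ℤ_[2])‖ = 2⁻¹ := by
              simpa using PadicInt.norm_p (p := 2)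
            rw [this]; norm_num
    have : (1 : ℝ) = ‖(1 : ℤ_[2])‖ := by simp
    have h1 : ‖(1 : ℤ_[2])‖ ≤ max ‖MC.det‖ ‖-(MC.det - 1)‖ := by
      have := PadicInt.nonarchimedean MC.det (-(MC.det - 1))
      simpa using this
    rw [norm_neg] at h1
    have : (1 : ℝ) < 1 := by
      calc (1 : ℝ) = ‖(1 : ℤ_[2])‖ := by simp
        _ ≤ max ‖MC.det‖ ‖MC.det - 1‖ := h1
        _ < 1 := max_lt hlt hsub
    exact absurd this (lt_irrefl 1)
  have hdetC_ne : ((MC.det : ℤ_[2]) : ℚ_[2]) ≠ 0 := by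
    rw [Ne, PadicInt.coe_eq_zero]
    intro h; rw [h, norm_zero] at hnorm; norm_num at hnorm
  have hvalC : ((MC.det : ℤ_[2]) : ℚ_[2]).valuation = 0 := by
    have hn : ‖((MC.det : ℤ_[2]) : ℚ_[2])‖ = 1 := by
      rw [← PadicInt.norm_def]; exact hnorm
    have := Padic.norm_eq_zpow_neg_valuation hdetC_ne
    rw [hn] at this
    have h2 : ((2 : ℕ) : ℝ) ^ (-(((MC.det : ℤ_[2]) : ℚ_[2])).valuation) = (2:ℝ) ^ (0:ℤ) := by
      rw [← this]; norm_num
    have h3 : (2:ℝ) ^ (-(((MC.det : ℤ_[2]) : ℚ_[2])).valuation) = (2:ℝ) ^ (0:ℤ) := by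
      exact_mod_cast h2
    have h4 := (zpow_right_inj₀ (by norm_num : (0:ℝ) < 2) (by norm_num : (2:ℝ) ≠ 1)).1 h3
    linarith [neg_eq_zero.mp h4]
  -- Factor the matrix as (coe of C) * diagonal D.
  have hfact : (Matrix.of fun i j : S =>
        (∑ k ∈ Finset.Icc 1 (2 * (i : ℕ+)),
          ((B i k : ℚ_[2]) * (A k j : ℚ_[2]))) * dDiag (j : ℕ+)) =
      (Matrix.of fun i j : S => ((C (i : ℕ+) (j : ℕ+) : ℤ_[2]) : ℚ_[2])) *
        (Matrix.of fun i j : S => if i = j then dDiag (i : ℕ+) else (0 : ℚ_[2])) := by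
    ext i j
    rw [Matrix.mul_apply]
    simp only [Matrix.of_apply, mul_ite, mul_zero]
    rw [Finset.sum_ite_eq' Finset.univ j
      (fun k : S => ((C (i : ℕ+) (k : ℕ+) : ℤ_[2]) : ℚ_[2]) * dDiag (k : ℕ+))]
    rw [if_pos (Finset.mem_univ j)]
    have hcoe : ((∑ k ∈ Finset.Icc 1 (2 * (i:ℕ+)), B (i:ℕ+) k * A k (j:ℕ+) : ℤ_[2]) : ℚ_[2])
        = ∑ k ∈ Finset.Icc 1 (2 * (i:ℕ+)), (B (i:ℕ+) k : ℚ_[2]) * (A k (j:ℕ+) : ℚ_[2]) := by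
      rw [show ((∑ k ∈ Finset.Icc 1 (2 * (i:ℕ+)), B (i:ℕ+) k * A k (j:ℕ+) : ℤ_[2]) : ℚ_[2]) =
        (PadicInt.Coe.ringHom (p := 2))
          (∑ k ∈ Finset.Icc 1 (2 * (i:ℕ+)), B (i:ℕ+) k * A k (j:ℕ+)) from rfl, map_sum]
      exact Finset.sum_congr rfl fun k _ => rfl
    rw [hcoe]
  have hdetEq : (Matrix.of fun i j : S => ((C (i : ℕ+) (j : ℕ+) : ℤ_[2]) : ℚ_[2])).det =
      ((MC.det : ℤ_[2]) : ℚ_[2]) := by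
    have he : (Matrix.of fun i j : S => ((C (i : ℕ+) (j : ℕ+) : ℤ_[2]) : ℚ_[2])) =
        MC.map (PadicInt.Coe.ringHom (p := 2)) := rfl
    rw [he, ← RingHom.mapMatrix_apply, ← RingHom.map_det]
    rfl
  rw [hfact, Matrix.det_mul, hdetEq, Padic.valuation_mul hdetC_ne hD, hvalC, zero_add]
end
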